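/- arXiv:2208.02785 — 9 statements merged into one kernel-verified Lean document; each statement's English description precedes it below -/
import Mathlib

section
/- Let f : ℝ^n → ℝ^n be continuously differentiable with global flow φ, let h : ℝ^n → ℝ be continuously differentiable, let M ⊆ ℝ^n be closed, and set D := {x ∈ ℝ^n : h(x) = 0 and ⟨∇h(x), f(x)⟩ ≤ 0}. For x ∈ ℝ^n define the time-to-impact T_I(x) := inf{t ≥ 0 : φ(t,x) ∈ D} ∈ [0,∞]. Assume ⟨∇h(x), f(x)⟩ < 0 for every x ∈ M ∩ D. Let x* ∈ ℝ^n be such that 0 < T_I(x*) < ∞, h(φ(t,x*)) > 0 for every t ∈ [0, T_I(x*)), φ(t,x*) ∈ M for every t ∈ [0, T_I(x*)], and φ(T_I(x*), x*) ∈ M ∩ D. Then T_I is continuous at x*: for every ε > 0 there exists δ > 0 such that every x ∈ ℝ^n with |x − x*| < δ satisfies T_I(x) < ∞ and |T_I(x) − T_I(x*)| < ε. -/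
/-!
Let `T` be the impact time of `x⋆` and `p = φ(T, x⋆)`. Transversality `⟪∇h, f⟫(p) < 0` gives a
window `[T - σ, T + σ]` on which `⟪∇h, f⟫ < 0` along the trajectory, so that `h ∘ φ(·, x⋆)` is
strictly decreasing there and negative at `T + σ`; before `T - σ` it is positive. By Gronwall's
inequality on a compact neighbourhood of the trajectory, where `f` is Lipschitz, `φ(·, x)` converges
uniformly to `φ(·, x⋆)` on `[0, T + σ]` as `x → x⋆`, so these three strict sign conditions persist
for `x` near `x⋆`. The intermediate value theorem then places the first impact of `x` in
`[T - σ, T + σ]`.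
-/

open Set Metric RealInnerProductSpace Filter Topology

theorem forall_lt_of_forall_Ico_lt {d : ℝ → ℝ} {a b c : ℝ} (hd : ContinuousOn d (Icc a b))
    (hstep : ∀ τ ∈ Icc a b, (∀ s ∈ Ico a τ, d s < c) → d τ < c) :
    ∀ t ∈ Icc a b, d t < c := by
  by_contra! hbad
  have hclosed : IsClosed (Icc a b ∩ d ⁻¹' Ici c) :=
    hd.preimage_isClosed_of_isClosed isClosed_Icc isClosed_Ici
  obtain ⟨τ, ⟨hτ, hτc⟩, hleast⟩ :=
    (isCompact_Icc.of_isClosed_subset hclosed inter_subset_left).exists_isLeast hbad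
  refine (hstep τ hτ fun s hs => ?_).not_ge hτc
  by_contra! hsc
  exact hs.2.not_ge (hleast ⟨⟨hs.1, hs.2.le.trans hτ.2⟩, hsc⟩)

theorem TendstoUniformlyOn.eventually_mapsTo {ι α β : Type*} [PseudoMetricSpace β]
    {F : ι → α → β} {g : α → β} {p : Filter ι} {K : Set α} {U : Set β}
    (h : TendstoUniformlyOn F g p K) (hK : IsCompact (g '' K)) (hU : IsOpen U)
    (hgU : MapsTo g K U) : ∀ᶠ i in p, MapsTo (F i) K U := by
  obtain ⟨ε, hε, hsub⟩ := hK.exists_thickening_subset_open hU hgU.image_subset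
  filter_upwards [Metric.tendstoUniformlyOn_iff.1 h ε hε] with i hi t ht
  exact hsub (mem_thickening_iff.2 ⟨g t, mem_image_of_mem g ht, by rw [dist_comm]; exact hi t ht⟩)

theorem exists_window_of_hasDerivAt_neg {u u' : ℝ → ℝ} {T ε : ℝ}
    (hu : ∀ t, HasDerivAt u (u' t) t) (hu' : ContinuousAt u' T) (hT : u' T < 0) (hε : 0 < ε) :
    ∃ σ, 0 < σ ∧ σ < ε ∧ u (T + σ) < u T ∧ ∀ t ∈ Icc (T - σ) (T + σ), u' t < 0 := by
  obtain ⟨η, hη, hball⟩ := Metric.eventually_nhds_iff.1 (hu'.eventually_lt continuousAt_const hT)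
  set σ := min (η / 2) (ε / 2)
  have hσ : 0 < σ := by positivity
  have hση : σ < η := (min_le_left _ _).trans_lt (half_lt_self hη)
  have hwin : ∀ t ∈ Icc (T - σ) (T + σ), u' t < 0 := fun t ht => hball <| by
    rw [Real.dist_eq, abs_lt]; constructor <;> linarith [ht.1, ht.2]
  refine ⟨σ, hσ, (min_le_right _ _).trans_lt (half_lt_self hε), ?_, hwin⟩
  have hanti : StrictAntiOn u (Icc T (T + σ)) :=
    strictAntiOn_of_hasDerivWithinAt_neg (convex_Icc _ _)
      (fun t _ => (hu t).continuousAt.continuousWithinAt) (fun t _ => (hu t).hasDerivWithinAt)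
      (fun t ht => hwin t (Icc_subset_Icc (by linarith) le_rfl (interior_subset ht)))
  exact hanti ⟨le_rfl, by linarith⟩ ⟨by linarith, le_rfl⟩ (by linarith)

theorem sInf_mem_Icc_of_sign_change {u g : ℝ → ℝ} {a b : ℝ} (ha : 0 ≤ a) (hab : a ≤ b)
    (hu : ContinuousOn u (Icc a b)) (hpos : ∀ t ∈ Icc 0 a, 0 < u t) (hneg : u b < 0)
    (hg : ∀ t ∈ Icc a b, g t ≤ 0) :
    {t | 0 ≤ t ∧ u t = 0 ∧ g t ≤ 0}.Nonempty ∧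
      sInf {t | 0 ≤ t ∧ u t = 0 ∧ g t ≤ 0} ∈ Icc a b := by
  obtain ⟨t₀, ht₀, hu₀⟩ := intermediate_value_Icc' hab hu ⟨hneg.le, (hpos a ⟨ha, le_rfl⟩).le⟩
  have hmem : t₀ ∈ {t | 0 ≤ t ∧ u t = 0 ∧ g t ≤ 0} := ⟨ha.trans ht₀.1, hu₀, hg t₀ ht₀⟩
  refine ⟨⟨t₀, hmem⟩, le_csInf ⟨t₀, hmem⟩ fun t ⟨ht, hut, _⟩ => ?_,
    (csInf_le ⟨0, fun t ht => ht.1⟩ hmem).trans ht₀.2⟩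
  by_contra! hta
  exact (hpos t ⟨ht, hta.le⟩).ne' hut

section Flow

variable {E : Type*} [NormedAddCommGroup E] [NormedSpace ℝ E] {f : E → E} {φ : ℝ → E → E}

theorem continuous_flow_apply (hφ : ∀ t x, HasDerivAt (fun s => φ s x) (f (φ t x)) t) (x : E) :
    Continuous fun t => φ t x :=
  continuous_iff_continuousAt.2 fun t => (hφ t x).continuousAt

theorem tendstoUniformlyOn_flow [ProperSpace E] (hf : LocallyLipschitz f)
    (hφ0 : ∀ x, φ 0 x = x) (hφ : ∀ t x, HasDerivAt (fun s => φ s x) (f (φ t x)) t)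
    (x₀ : E) (T : ℝ) :
    TendstoUniformlyOn (fun x t => φ t x) (fun t => φ t x₀) (𝓝 x₀) (Icc 0 T) := by
  set B := cthickening 1 ((fun t => φ t x₀) '' Icc 0 T)
  have hB : IsCompact B := (isCompact_Icc.image (continuous_flow_apply hφ x₀)).cthickening
  obtain ⟨L, hL⟩ := hf.locallyLipschitzOn.exists_lipschitzOnWith_of_compact hB
  rw [Metric.tendstoUniformlyOn_iff]
  intro ε hε
  set ρ := min ε 1
  set δ := ρ / (2 * Real.exp (L * T))
  filter_upwards [ball_mem_nhds x₀ (by positivity : 0 < δ)] with x hx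
  -- Continuation: as long as the trajectories stay `ρ`-close, both lie in `B`, and Gronwall
  -- keeps them `ρ / 2`-close.
  have hclose : ∀ t ∈ Icc 0 T, dist (φ t x₀) (φ t x) < ρ := by
    refine forall_lt_of_forall_Ico_lt
      ((continuous_flow_apply hφ x₀).dist (continuous_flow_apply hφ x)).continuousOn
      fun τ hτ hprev => ?_
    have hmem : ∀ s ∈ Ico 0 τ, φ s x₀ ∈ (fun t => φ t x₀) '' Icc 0 T :=
      fun s hs => ⟨s, ⟨hs.1, hs.2.le.trans hτ.2⟩, rfl⟩
    have hgron := dist_le_of_trajectories_ODE_of_mem (v := fun _ => f) (s := fun _ => B)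
      (δ := δ) (fun _ _ => hL) (continuous_flow_apply hφ x₀).continuousOn
      (fun s _ => (hφ s x₀).hasDerivWithinAt) (fun s hs => self_subset_cthickening _ (hmem s hs))
      (continuous_flow_apply hφ x).continuousOn (fun s _ => (hφ s x).hasDerivWithinAt)
      (fun s hs => mem_cthickening_of_dist_le _ _ _ _ (hmem s hs)
        (by rw [dist_comm]; exact (hprev s hs).le.trans (min_le_right _ _)))
      (by rw [hφ0, hφ0, dist_comm]; exact (mem_ball.1 hx).le) τ ⟨hτ.1, le_rfl⟩
    calc dist (φ τ x₀) (φ τ x) ≤ δ * Real.exp (L * (τ - 0)) := hgron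
      _ ≤ δ * Real.exp (L * T) := by gcongr; linarith [hτ.2]
      _ = ρ / 2 := by simp only [δ]; field_simp
      _ < ρ := half_lt_self (by positivity)
  exact fun t ht => (hclose t ht).trans_le (min_le_left _ _)

theorem eventually_mapsTo_flow [ProperSpace E] (hf : LocallyLipschitz f)
    (hφ0 : ∀ x, φ 0 x = x) (hφ : ∀ t x, HasDerivAt (fun s => φ s x) (f (φ t x)) t)
    {x₀ : E} {K : Set ℝ} (hK : IsCompact K) (hK0 : K ⊆ Ici 0) {U : Set E} (hU : IsOpen U)
    (hKU : MapsTo (fun t => φ t x₀) K U) : ∀ᶠ x in 𝓝 x₀, MapsTo (fun t => φ t x) K U := by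
  obtain ⟨T, hT⟩ := hK.bddAbove
  exact ((tendstoUniformlyOn_flow hf hφ0 hφ x₀ T).mono fun t ht => ⟨hK0 ht, hT ht⟩
    ).eventually_mapsTo (hK.image (continuous_flow_apply hφ x₀)) hU hKU

end Flow

theorem hasDerivAt_comp_flow {E : Type*} [NormedAddCommGroup E] [InnerProductSpace ℝ E]
    [CompleteSpace E] {f : E → E} {φ : ℝ → E → E} {h : E → ℝ} (hh : Differentiable ℝ h)
    (hφ : ∀ t x, HasDerivAt (fun s => φ s x) (f (φ t x)) t) (x : E) (t : ℝ) :
    HasDerivAt (fun s => h (φ s x)) ⟪gradient h (φ t x), f (φ t x)⟫ t :=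
  ((hh (φ t x)).hasGradientAt.hasFDerivAt.comp_hasDerivAt t (hφ t x) :)

theorem stmt_0_general (n : ℕ)
    (f : EuclideanSpace ℝ (Fin n) → EuclideanSpace ℝ (Fin n))
    (hf : ContDiff ℝ 1 f)
    (φ : ℝ → EuclideanSpace ℝ (Fin n) → EuclideanSpace ℝ (Fin n))
    (hφ0 : ∀ x, φ 0 x = x)
    (hφ' : ∀ (t : ℝ) (x : EuclideanSpace ℝ (Fin n)),
      HasDerivAt (fun s => φ s x) (f (φ t x)) t)
    (h : EuclideanSpace ℝ (Fin n) → ℝ) (hh : ContDiff ℝ 1 h)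
    (M : Set (EuclideanSpace ℝ (Fin n)))
    (D : Set (EuclideanSpace ℝ (Fin n)))
    (hD : D = {x | h x = 0 ∧ ⟪gradient h x, f x⟫ ≤ 0})
    (htrans : ∀ x ∈ M ∩ D, ⟪gradient h x, f x⟫ < 0)
    (xstar : EuclideanSpace ℝ (Fin n))
    (hpos : 0 < sInf {t : ℝ | 0 ≤ t ∧ φ t xstar ∈ D})
    (hflowpos : ∀ t ∈ Ico (0:ℝ) (sInf {t : ℝ | 0 ≤ t ∧ φ t xstar ∈ D}),
      0 < h (φ t xstar))
    (hendMD : φ (sInf {t : ℝ | 0 ≤ t ∧ φ t xstar ∈ D}) xstar ∈ M ∩ D) :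
    ∀ ε > 0, ∃ δ > 0, ∀ x : EuclideanSpace ℝ (Fin n), ‖x - xstar‖ < δ →
      {t : ℝ | 0 ≤ t ∧ φ t x ∈ D}.Nonempty ∧
      |sInf {t : ℝ | 0 ≤ t ∧ φ t x ∈ D} -
        sInf {t : ℝ | 0 ≤ t ∧ φ t xstar ∈ D}| < ε := by
  intro ε hε
  set T := sInf {t : ℝ | 0 ≤ t ∧ φ t xstar ∈ D}
  set G := fun y => ⟪gradient h y, f y⟫
  have hG : Continuous G := ((InnerProductSpace.toDual ℝ _).symm.continuous.comp
    (hh.continuous_fderiv one_ne_zero)).inner hf.continuous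
  obtain ⟨σ, hσ, hσε, hdown, hGneg⟩ := exists_window_of_hasDerivAt_neg
    (hasDerivAt_comp_flow (hh.differentiable one_ne_zero) hφ' xstar)
    (hG.comp (continuous_flow_apply hφ' xstar)).continuousAt (htrans _ hendMD) (lt_min hε hpos)
  obtain ⟨hσε', hσT⟩ := lt_min_iff.1 hσε
  have hp0 : h (φ T xstar) = 0 := by rw [hD] at hendMD; exact hendMD.2.1
  have hDx : ∀ x, {t | 0 ≤ t ∧ φ t x ∈ D} = {t | 0 ≤ t ∧ h (φ t x) = 0 ∧ G (φ t x) ≤ 0} :=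
    fun x => by rw [hD]; rfl
  obtain ⟨δ, hδ, hnear⟩ := Metric.eventually_nhds_iff.1 <|
    (eventually_mapsTo_flow hf.locallyLipschitz hφ0 hφ' (K := Icc 0 (T - σ)) isCompact_Icc
      (fun t ht => ht.1) (isOpen_lt continuous_const hh.continuous)
      (fun t ht => hflowpos t ⟨ht.1, by linarith [ht.2]⟩)).and <|
    (eventually_mapsTo_flow hf.locallyLipschitz hφ0 hφ' isCompact_singleton
      (singleton_subset_iff.2 (by linarith : (0:ℝ) ≤ T + σ))
      (isOpen_lt hh.continuous continuous_const)
      (mapsTo_singleton.2 (hdown.trans_eq hp0))).and <|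
    eventually_mapsTo_flow hf.locallyLipschitz hφ0 hφ' (K := Icc (T - σ) (T + σ)) isCompact_Icc
      (fun t ht => mem_Ici.2 (by linarith [ht.1])) (isOpen_lt hG continuous_const) hGneg
  refine ⟨δ, hδ, fun x hx => ?_⟩
  obtain ⟨hposx, hnegx, hGx⟩ := hnear (by rwa [dist_eq_norm])
  obtain ⟨hne, hmem⟩ := sInf_mem_Icc_of_sign_change (u := fun t => h (φ t x))
    (g := fun t => G (φ t x)) (by linarith) (by linarith)
    (hh.continuous.comp (continuous_flow_apply hφ' x)).continuousOn hposx
    (hnegx (mem_singleton _)) (fun t ht => (hGx ht).le)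
  rw [hDx]
  exact ⟨hne, abs_sub_lt_iff.2 ⟨by linarith [hmem.2], by linarith [hmem.1]⟩⟩

/-- Continuity of the time-to-impact function at a point `xstar` where the impact
time is positive and finite, the flow stays in `{h > 0}` before impact, remains in `M`,
and ends in `M ∩ D`, assuming transversality `⟪∇h, f⟫ < 0` on `M ∩ D`. -/
theorem stmt_0 (n : ℕ) (hn : 1 ≤ n)
    (f : EuclideanSpace ℝ (Fin n) → EuclideanSpace ℝ (Fin n))
    (hf : ContDiff ℝ 1 f)
    (φ : ℝ → EuclideanSpace ℝ (Fin n) → EuclideanSpace ℝ (Fin n))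
    (hφ0 : ∀ x, φ 0 x = x)
    (hφ' : ∀ (t : ℝ) (x : EuclideanSpace ℝ (Fin n)),
      HasDerivAt (fun s => φ s x) (f (φ t x)) t)
    (h : EuclideanSpace ℝ (Fin n) → ℝ) (hh : ContDiff ℝ 1 h)
    (M : Set (EuclideanSpace ℝ (Fin n))) (hM : IsClosed M)
    (D : Set (EuclideanSpace ℝ (Fin n)))
    (hD : D = {x | h x = 0 ∧ ⟪gradient h x, f x⟫ ≤ 0})
    (htrans : ∀ x ∈ M ∩ D, ⟪gradient h x, f x⟫ < 0)
    (xstar : EuclideanSpace ℝ (Fin n))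
    (hne : {t : ℝ | 0 ≤ t ∧ φ t xstar ∈ D}.Nonempty)
    (hpos : 0 < sInf {t : ℝ | 0 ≤ t ∧ φ t xstar ∈ D})
    (hflowpos : ∀ t ∈ Ico (0:ℝ) (sInf {t : ℝ | 0 ≤ t ∧ φ t xstar ∈ D}),
      0 < h (φ t xstar))
    (hflowM : ∀ t ∈ Icc (0:ℝ) (sInf {t : ℝ | 0 ≤ t ∧ φ t xstar ∈ D}),
      φ t xstar ∈ M)
    (hendMD : φ (sInf {t : ℝ | 0 ≤ t ∧ φ t xstar ∈ D}) xstar ∈ M ∩ D) :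
    ∀ ε > 0, ∃ δ > 0, ∀ x : EuclideanSpace ℝ (Fin n), ‖x - xstar‖ < δ →
      {t : ℝ | 0 ≤ t ∧ φ t x ∈ D}.Nonempty ∧
      |sInf {t : ℝ | 0 ≤ t ∧ φ t x ∈ D} -
        sInf {t : ℝ | 0 ≤ t ∧ φ t xstar ∈ D}| < ε :=
  stmt_0_general n f hf φ hφ0 hφ' h hh M D hD htrans xstar hpos hflowpos hendMD
end

section
/- Let f : ℝ^n → ℝ^n be continuously differentiable with global flow φ, and let v ∈ ℝ^n satisfy f(v) ≠ 0. Then there exists t̄₀ > 0 such that for every t̄ ∈ (0, t̄₀] there exist σ > 0 and a closed set Σ ⊆ {φ(t,x) : t ∈ [0,t̄], x ∈ B̄(v,σ)} with the following property: for every q ∈ B̄(v,σ) there exists a unique t_q ∈ [0, t̄] such that φ(t_q, q) ∈ Σ. -/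
/-!
Cut the flow by the hyperplane orthogonal to `f v` through a point slightly ahead of `v`. On a
small ball around `v` the field stays within `‖f v‖ / 2` of `f v`, so along each trajectory
starting near `v` the height `t ↦ ⟪f v, φ t q⟫` increases at rate at least `‖f v‖² / 2` for as
long as the trajectory remains in the ball, which it does for a time proportional to the radius.
Hence every such trajectory meets the hyperplane exactly once during `[0, t̄]`. Intersecting the
hyperplane with the flow tube `φ ([0, t̄] × B̄(v, σ))` keeps `Σ` inside the tube, and `Σ` stays
closed because the tube is compact: by Gronwall's inequality the time-`t` maps are uniformly
Lipschitz, so the flow is jointly continuous.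
-/

open Set Metric
open scoped NNReal RealInnerProductSpace Topology

section Normed

variable {E : Type*} [NormedAddCommGroup E] [NormedSpace ℝ E]

theorem ContDiffAt.exists_closedBall_lipschitzOnWith_norm_sub_le {F : Type*} [NormedAddCommGroup F]
    [NormedSpace ℝ F] {f : E → F} {v : E} (hf : ContDiffAt ℝ 1 f v) {ε : ℝ} (hε : 0 < ε) :
    ∃ (K : ℝ≥0) (r : ℝ), 0 < r ∧ LipschitzOnWith K f (closedBall v r) ∧
      ∀ y ∈ closedBall v r, ‖f y - f v‖ ≤ ε := by
  obtain ⟨K, U, hU, hK⟩ := hf.exists_lipschitzOnWith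
  have hnhds : U ∩ f ⁻¹' closedBall (f v) ε ∈ 𝓝 v :=
    Filter.inter_mem hU (hf.continuousAt.preimage_mem_nhds (closedBall_mem_nhds _ hε))
  obtain ⟨r, hr, hsub⟩ := nhds_basis_closedBall.mem_iff.1 hnhds
  exact ⟨K, r, hr, hK.mono (hsub.trans inter_subset_left),
    fun y hy => mem_closedBall_iff_norm.1 (hsub hy).2⟩

theorem mem_ball_of_hasDerivAt_of_norm_le {f : E → E} {γ : ℝ → E} {M R T : ℝ}
    (hγ : ∀ t, HasDerivAt γ (f (γ t)) t) (hM₀ : 0 ≤ M) (hM : ∀ y ∈ ball (γ 0) R, ‖f y‖ ≤ M)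
    (hMT : M * T < R) {t : ℝ} (ht : t ∈ Icc 0 T) : γ t ∈ ball (γ 0) R := by
  by_contra hexit
  have hcont : Continuous γ := continuous_iff_continuousAt.2 fun t => (hγ t).continuousAt
  set A := {s ∈ Icc 0 T | R ≤ dist (γ s) (γ 0)}
  have hA : IsClosed A :=
    isClosed_Icc.inter (isClosed_le continuous_const (hcont.dist continuous_const))
  have hAbdd : BddBelow A := ⟨0, fun s hs => hs.1.1⟩
  -- `sInf A` is the first exit time
  have hexit₁ : sInf A ∈ A := hA.csInf_mem ⟨t, ht, not_lt.1 hexit⟩ hAbdd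
  have hinside : ∀ s ∈ Ico 0 (sInf A), γ s ∈ ball (γ 0) R := fun s hs =>
    not_le.1 fun hs' => notMem_of_lt_csInf hs.2 hAbdd ⟨⟨hs.1, hs.2.le.trans hexit₁.1.2⟩, hs'⟩
  have hmvt := norm_image_sub_le_of_norm_deriv_right_le_segment hcont.continuousOn
    (fun s _ => (hγ s).hasDerivWithinAt) (fun s hs => hM _ (hinside s hs)) (sInf A)
    (right_mem_Icc.2 hexit₁.1.1)
  have hMT' : M * sInf A ≤ M * T := mul_le_mul_of_nonneg_left hexit₁.1.2 hM₀
  rw [← dist_eq_norm, sub_zero] at hmvt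
  linarith [hexit₁.2]

variable {f : E → E} {φ : ℝ → E → E}

theorem flow_mem_closedBall (hφ0 : ∀ x, φ 0 x = x)
    (hφ : ∀ t x, HasDerivAt (fun s => φ s x) (f (φ t x)) t) {v : E} {r M T : ℝ} (hM₀ : 0 ≤ M)
    (hM : ∀ y ∈ closedBall v r, ‖f y‖ ≤ M) (hMT : M * T < r / 2) {x : E}
    (hx : x ∈ closedBall v (r / 2)) {t : ℝ} (ht : t ∈ Icc 0 T) : φ t x ∈ closedBall v r := by
  have hball : ball x (r / 2) ⊆ closedBall v r :=
    ball_subset_ball' (by linarith [mem_closedBall.1 hx]) |>.trans ball_subset_closedBall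
  have hmem := mem_ball_of_hasDerivAt_of_norm_le (γ := fun s => φ s x) (hφ · x) hM₀
    (fun y hy => hM y (hball (by rwa [hφ0] at hy))) hMT ht
  rw [hφ0] at hmem
  exact hball hmem

theorem lipschitzOnWith_flow (hφ0 : ∀ x, φ 0 x = x)
    (hφ : ∀ t x, HasDerivAt (fun s => φ s x) (f (φ t x)) t) {s B : Set E} {K : ℝ≥0} {T : ℝ}
    (hK : LipschitzOnWith K f s) (hmaps : ∀ x ∈ B, ∀ t ∈ Icc 0 T, φ t x ∈ s) {t : ℝ}
    (ht : t ∈ Icc 0 T) : LipschitzOnWith (Real.exp (K * T)).toNNReal (φ t) B := by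
  refine LipschitzOnWith.of_dist_le_mul fun x hx y hy => ?_
  have hgronwall := dist_le_of_trajectories_ODE_of_mem (v := fun _ => f) (s := fun _ => s)
    (fun _ _ => hK) (fun τ _ => (hφ τ x).continuousAt.continuousWithinAt)
    (fun τ _ => (hφ τ x).hasDerivWithinAt) (fun τ hτ => hmaps x hx τ (Ico_subset_Icc_self hτ))
    (fun τ _ => (hφ τ y).continuousAt.continuousWithinAt)
    (fun τ _ => (hφ τ y).hasDerivWithinAt) (fun τ hτ => hmaps y hy τ (Ico_subset_Icc_self hτ))
    (by rw [hφ0, hφ0]) t ht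
  calc dist (φ t x) (φ t y) ≤ dist x y * Real.exp (K * t) := by simpa [hφ0] using hgronwall
    _ ≤ dist x y * Real.exp (K * T) := by gcongr; exact ht.2
    _ = (Real.exp (K * T)).toNNReal * dist x y := by
      rw [Real.coe_toNNReal _ (Real.exp_pos _).le, mul_comm]

theorem isCompact_flow_image (hφ0 : ∀ x, φ 0 x = x)
    (hφ : ∀ t x, HasDerivAt (fun s => φ s x) (f (φ t x)) t) {s B : Set E} {K : ℝ≥0} {T : ℝ}
    (hK : LipschitzOnWith K f s) (hB : IsCompact B) (hmaps : ∀ x ∈ B, ∀ t ∈ Icc 0 T, φ t x ∈ s) :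
    IsCompact {y | ∃ t ∈ Icc 0 T, ∃ x ∈ B, y = φ t x} := by
  have hcont : ContinuousOn (Function.uncurry φ) (Icc 0 T ×ˢ B) :=
    continuousOn_prod_of_continuousOn_lipschitzOnWith' _ _
      (fun t ht => lipschitzOnWith_flow hφ0 hφ hK hmaps ht)
      (fun x _ => continuous_iff_continuousAt.2 (fun t => (hφ t x).continuousAt) |>.continuousOn)
  have himage : {y | ∃ t ∈ Icc 0 T, ∃ x ∈ B, y = φ t x} = Function.uncurry φ '' (Icc 0 T ×ˢ B) := by
    simp only [image_uncurry_prod, image2, eq_comm]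
  rw [himage]
  exact (isCompact_Icc.prod hB).image_of_continuousOn hcont

end Normed

theorem StrictMonoOn.existsUnique_mem_Icc_eq {g : ℝ → ℝ} {a b L : ℝ}
    (hg : StrictMonoOn g (Icc a b)) (hcont : ContinuousOn g (Icc a b)) (hab : a ≤ b)
    (hL : L ∈ Icc (g a) (g b)) : ∃! t, t ∈ Icc a b ∧ g t = L := by
  obtain ⟨t, ht, hgt⟩ := intermediate_value_Icc hab hcont hL
  exact ⟨t, ⟨ht, hgt⟩, fun s ⟨hs, hgs⟩ => hg.injOn hs ht (hgs.trans hgt.symm)⟩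

section InnerProduct

variable {E : Type*} [NormedAddCommGroup E] [InnerProductSpace ℝ E]

theorem real_inner_ge_of_norm_sub_le {a b : E} (h : ‖b - a‖ ≤ ‖a‖ / 2) :
    ‖a‖ ^ 2 / 2 ≤ ⟪a, b⟫ := by
  have hcs : -(‖a‖ * ‖b - a‖) ≤ ⟪a, b - a⟫ := (abs_le.1 (abs_real_inner_le_norm a (b - a))).1
  have hsmall : ‖a‖ * ‖b - a‖ ≤ ‖a‖ * (‖a‖ / 2) := mul_le_mul_of_nonneg_left h (norm_nonneg a)
  rw [inner_sub_right, real_inner_self_eq_norm_sq] at hcs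
  nlinarith

theorem mul_sub_le_inner_sub_of_le_inner_deriv {γ γ' : ℝ → E} {w : E} {a b c : ℝ}
    (hγ : ∀ t, HasDerivAt γ (γ' t) t) (hc : ∀ t ∈ Icc a b, c ≤ ⟪w, γ' t⟫) :
    ∀ s ∈ Icc a b, ∀ t ∈ Icc a b, s ≤ t → c * (t - s) ≤ ⟪w, γ t⟫ - ⟪w, γ s⟫ := by
  have hderiv : ∀ t, HasDerivAt (fun s => ⟪w, γ s⟫) ⟪w, γ' t⟫ t := fun t =>
    (innerSL ℝ w).hasFDerivAt.comp_hasDerivAt t (hγ t)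
  refine (convex_Icc a b).mul_sub_le_image_sub_of_le_deriv
    (fun t _ => (hderiv t).continuousAt.continuousWithinAt)
    (fun t _ => (hderiv t).differentiableAt.differentiableWithinAt) fun t ht => ?_
  rw [(hderiv t).deriv]
  exact hc t (interior_subset ht)

variable {f : E → E} {φ : ℝ → E → E}

theorem exists_forward_section [ProperSpace E] (hφ0 : ∀ x, φ 0 x = x)
    (hφ : ∀ t x, HasDerivAt (fun s => φ s x) (f (φ t x)) t) {v : E} (hv : f v ≠ 0) {K : ℝ≥0}
    {r T : ℝ} (hK : LipschitzOnWith K f (closedBall v r))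
    (hfv : ∀ y ∈ closedBall v r, ‖f y - f v‖ ≤ ‖f v‖ / 2) (hT : 0 < T)
    (hTr : 2 * ‖f v‖ * T < r / 2) :
    ∃ σ > (0:ℝ), ∃ S : Set E, IsClosed S ∧
      S ⊆ {y | ∃ t ∈ Icc (0:ℝ) T, ∃ x ∈ closedBall v σ, y = φ t x} ∧
      ∀ q ∈ closedBall v σ, ∃! tq, tq ∈ Icc (0:ℝ) T ∧ φ tq q ∈ S := by
  set a := f v
  have ha : 0 < ‖a‖ := norm_pos_iff.2 hv
  have hM : ∀ y ∈ closedBall v r, ‖f y‖ ≤ 2 * ‖a‖ := fun y hy => by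
    linarith [norm_le_norm_add_norm_sub' (f y) a, hfv y hy]
  set σ := min (r / 2) (‖a‖ * T / 4)
  have hσ : 0 < σ := lt_min (by nlinarith) (by positivity)
  have hmaps : ∀ x ∈ closedBall v σ, ∀ t ∈ Icc 0 T, φ t x ∈ closedBall v r := fun x hx t ht =>
    flow_mem_closedBall hφ0 hφ (by positivity) hM hTr
      (closedBall_subset_closedBall (min_le_left _ _) hx) ht
  refine ⟨σ, hσ, {y | ⟪a, y⟫ = ⟪a, v⟫ + ‖a‖ * σ} ∩ _,
    (isClosed_eq (by fun_prop) (by fun_prop)).inter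
      (isCompact_flow_image hφ0 hφ hK (isCompact_closedBall v σ) hmaps).isClosed,
    inter_subset_right, fun q hq => ?_⟩
  have hgrowth := mul_sub_le_inner_sub_of_le_inner_deriv (w := a) (hφ · q)
    fun t ht => real_inner_ge_of_norm_sub_le (hfv _ (hmaps q hq t ht))
  have hstart : |⟪a, q - v⟫| ≤ ‖a‖ * σ :=
    (abs_real_inner_le_norm a _).trans
      (mul_le_mul_of_nonneg_left (mem_closedBall_iff_norm.1 hq) ha.le)
  have hσT : ‖a‖ * σ ≤ ‖a‖ * (‖a‖ * T / 4) := mul_le_mul_of_nonneg_left (min_le_right _ _) ha.le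
  have hend := hgrowth 0 (left_mem_Icc.2 hT.le) T (right_mem_Icc.2 hT.le) hT.le
  rw [inner_sub_right] at hstart
  rw [hφ0] at hend
  have hmono : StrictMonoOn (fun t => ⟪a, φ t q⟫) (Icc 0 T) := fun s hs t ht hst => by
    have hpos : 0 < ‖a‖ ^ 2 / 2 * (t - s) := by have := sub_pos.2 hst; positivity
    linarith [hgrowth s hs t ht hst.le]
  obtain ⟨tq, ⟨htq, hcross⟩, huniq⟩ := hmono.existsUnique_mem_Icc_eq (L := ⟪a, v⟫ + ‖a‖ * σ)
    (fun t _ => ((innerSL ℝ a).continuous.continuousAt.comp (hφ t q).continuousAt)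
      |>.continuousWithinAt)
    hT.le ⟨by rw [hφ0]; linarith [abs_le.1 hstart], by linarith [abs_le.1 hstart]⟩
  exact ⟨tq, ⟨htq, hcross, tq, htq, q, hq, rfl⟩, fun t ⟨ht, hS, _⟩ => huniq t ⟨ht, hS⟩⟩

end InnerProduct

theorem stmt_1_general (n : ℕ)
    (f : EuclideanSpace ℝ (Fin n) → EuclideanSpace ℝ (Fin n))
    (hf : ContDiff ℝ 1 f)
    (φ : ℝ → EuclideanSpace ℝ (Fin n) → EuclideanSpace ℝ (Fin n))
    (hφ0 : ∀ x, φ 0 x = x)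
    (hφ' : ∀ (t : ℝ) (x : EuclideanSpace ℝ (Fin n)),
      HasDerivAt (fun s => φ s x) (f (φ t x)) t)
    (v : EuclideanSpace ℝ (Fin n)) (hv : f v ≠ 0) :
    ∃ tbar0 > (0:ℝ), ∀ tbar ∈ Ioc (0:ℝ) tbar0, ∃ σ > (0:ℝ),
      ∃ S : Set (EuclideanSpace ℝ (Fin n)), IsClosed S ∧
        S ⊆ {y | ∃ t ∈ Icc (0:ℝ) tbar, ∃ x ∈ closedBall v σ, y = φ t x} ∧
        ∀ q ∈ closedBall v σ, ∃! tq, tq ∈ Icc (0:ℝ) tbar ∧ φ tq q ∈ S := by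
  have ha : 0 < ‖f v‖ := norm_pos_iff.2 hv
  obtain ⟨K, r, hr, hK, hfv⟩ := hf.contDiffAt.exists_closedBall_lipschitzOnWith_norm_sub_le
    (half_pos ha)
  refine ⟨r / (8 * ‖f v‖), by positivity, fun tbar ⟨htbar, htbar0⟩ => ?_⟩
  refine exists_forward_section hφ0 hφ' hv hK hfv htbar ?_
  calc 2 * ‖f v‖ * tbar ≤ 2 * ‖f v‖ * (r / (8 * ‖f v‖)) := by gcongr
    _ = r / 4 := by field_simp; ring
    _ < r / 2 := by linarith

/-- Existence of a forward local section through a non-equilibrium point `v` of a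
continuously differentiable vector field `f` with global flow `φ`. -/
theorem stmt_1 (n : ℕ) (hn : 1 ≤ n)
    (f : EuclideanSpace ℝ (Fin n) → EuclideanSpace ℝ (Fin n))
    (hf : ContDiff ℝ 1 f)
    (φ : ℝ → EuclideanSpace ℝ (Fin n) → EuclideanSpace ℝ (Fin n))
    (hφ0 : ∀ x, φ 0 x = x)
    (hφ' : ∀ (t : ℝ) (x : EuclideanSpace ℝ (Fin n)),
      HasDerivAt (fun s => φ s x) (f (φ t x)) t)
    (v : EuclideanSpace ℝ (Fin n)) (hv : f v ≠ 0) :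
    ∃ tbar0 > (0:ℝ), ∀ tbar ∈ Ioc (0:ℝ) tbar0, ∃ σ > (0:ℝ),
      ∃ S : Set (EuclideanSpace ℝ (Fin n)), IsClosed S ∧
        S ⊆ {y | ∃ t ∈ Icc (0:ℝ) tbar, ∃ x ∈ closedBall v σ, y = φ t x} ∧
        ∀ q ∈ closedBall v σ, ∃! tq, tq ∈ Icc (0:ℝ) tbar ∧ φ tq q ∈ S :=
  stmt_1_general n f hf φ hφ0 hφ' v hv
end

section
/- Let f : ℝ^n → ℝ^n be continuously differentiable with global flow φ, let 𝒪 ⊆ ℝ^n be a compact set, and let T : ℝ^n → [0,∞] be a function. Let x* ∈ 𝒪 be such that T(x*) < ∞, T is continuous at x*, and φ(t,x*) ∈ 𝒪 for every t ∈ [0, T(x*)]. For x with T(x) < ∞ define d(x) := sup{dist(φ(t,x), 𝒪) : t ∈ [0, T(x)]}, where dist denotes Euclidean distance to the set 𝒪. Then d(x*) = 0 and d is continuous at x*: for every ε > 0 there exists δ > 0 such that every x with |x − x*| < δ satisfies T(x) < ∞ and d(x) ≤ ε. -/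
/-!
The orbit of `x*` lies in `𝒪` up to time `T(x*)`, so by continuity it stays `ε/2`-close to `𝒪`
up to some time `T(x*) + η`. Near `x*`, continuity of `T` keeps `T(x) < T(x*) + η`, and
Gronwall's inequality, applied on a compact neighbourhood of the orbit where `f` is Lipschitz,
keeps `φ(·, x)` within `ε/2` of `φ(·, x*)` on `[0, T(x*) + η]`.
-/

open Set Metric ENNReal

open Real Filter Topology

/-- Bootstrap: while `g` stays within `r` of `h` it lies in `C`, where Gronwall applies, and
Gronwall's bound then keeps it within `r`. -/
theorem dist_le_of_trajectories_of_ball_subset {E : Type*} [NormedAddCommGroup E]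
    [NormedSpace ℝ E] {f : E → E} {L : NNReal} {C : Set E} (hL : LipschitzOnWith L f C)
    {g h : ℝ → E} (hg : ∀ t, HasDerivAt g (f (g t)) t) (hh : ∀ t, HasDerivAt h (f (h t)) t)
    {b r : ℝ} (hC : ∀ t ∈ Icc 0 b, ball (h t) r ⊆ C)
    (hr : dist (g 0) (h 0) * exp (L * b) < r) :
    ∀ t ∈ Icc 0 b, dist (g t) (h t) ≤ dist (g 0) (h 0) * exp (L * t) := by
  have hgc : Continuous g := continuous_iff_continuousAt.2 fun t => (hg t).continuousAt
  have hhc : Continuous h := continuous_iff_continuousAt.2 fun t => (hh t).continuousAt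
  have hr0 : 0 < r := (mul_nonneg dist_nonneg (exp_pos _).le).trans_lt hr
  have gronwall : ∀ s ∈ Icc 0 b, (∀ τ ∈ Ico 0 s, dist (g τ) (h τ) < r) →
      dist (g s) (h s) ≤ dist (g 0) (h 0) * exp (L * s) := fun s hs hnear => by
    have hCs : ∀ τ ∈ Ico 0 s, τ ∈ Icc 0 b := fun τ hτ => ⟨hτ.1, hτ.2.le.trans hs.2⟩
    simpa using dist_le_of_trajectories_ODE_of_mem (v := fun _ => f) (s := fun _ => C)
      (fun _ _ => hL) hgc.continuousOn (fun τ _ => (hg τ).hasDerivWithinAt)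
      (fun τ hτ => hC τ (hCs τ hτ) (mem_ball.2 (hnear τ hτ)))
      hhc.continuousOn (fun τ _ => (hh τ).hasDerivWithinAt)
      (fun τ hτ => hC τ (hCs τ hτ) (mem_ball_self hr0)) le_rfl s ⟨hs.1, le_rfl⟩
  have hnear : ∀ t ∈ Icc 0 b, dist (g t) (h t) < r := by
    by_contra! ⟨t, ht, hrt⟩
    have hS : IsCompact {t ∈ Icc 0 b | r ≤ dist (g t) (h t)} :=
      isCompact_Icc.inter_right (isClosed_le continuous_const (hgc.dist hhc))
    obtain ⟨s, ⟨hs, hrs⟩, hmin⟩ := hS.exists_isLeast ⟨t, ht, hrt⟩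
    have hbelow : ∀ τ ∈ Ico 0 s, dist (g τ) (h τ) < r := fun τ hτ =>
      not_le.1 fun hrτ => (hmin ⟨⟨hτ.1, hτ.2.le.trans hs.2⟩, hrτ⟩).not_gt hτ.2
    have : dist (g 0) (h 0) * exp (L * s) ≤ dist (g 0) (h 0) * exp (L * b) := by
      gcongr; exact hs.2
    linarith [gronwall s hs hbelow]
  exact fun t ht => gronwall t ht fun τ hτ => hnear τ ⟨hτ.1, hτ.2.le.trans ht.2⟩

theorem eventually_forall_Icc_dist_flow_lt {E : Type*} [NormedAddCommGroup E]
    [NormedSpace ℝ E] [ProperSpace E] {f : E → E} (hf : LocallyLipschitz f)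
    {φ : ℝ → E → E} (hφ0 : ∀ x, φ 0 x = x)
    (hφ' : ∀ t x, HasDerivAt (fun s => φ s x) (f (φ t x)) t) (x₀ : E) (b : ℝ) {ε : ℝ}
    (hε : 0 < ε) :
    ∀ᶠ x in 𝓝 x₀, ∀ t ∈ Icc 0 b, dist (φ t x) (φ t x₀) < ε := by
  have hγ : Continuous fun t => φ t x₀ :=
    continuous_iff_continuousAt.2 fun t => (hφ' t x₀).continuousAt
  set C := cthickening 1 ((fun t => φ t x₀) '' Icc 0 b)
  obtain ⟨L, hL⟩ := hf.locallyLipschitzOn.exists_lipschitzOnWith_of_compact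
    ((isCompact_Icc.image hγ).cthickening (r := 1))
  have hC : ∀ t ∈ Icc 0 b, ball (φ t x₀) 1 ⊆ C := fun t ht =>
    (ball_subset_thickening (mem_image_of_mem (fun t => φ t x₀) ht) 1).trans (thickening_subset_cthickening _ _)
  have hρ : 0 < min ε 1 := lt_min hε one_pos
  filter_upwards [ball_mem_nhds x₀ (mul_pos hρ (exp_pos (-(L * b))))] with x hx t ht
  rw [mem_ball, exp_neg, ← div_eq_mul_inv, lt_div_iff₀ (exp_pos _)] at hx
  have hgap := dist_le_of_trajectories_of_ball_subset hL (hφ' · x) (hφ' · x₀) hC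
    (by simpa only [hφ0] using hx.trans_le (min_le_right _ _)) t ht
  simp only [hφ0] at hgap
  calc dist (φ t x) (φ t x₀) ≤ dist x x₀ * exp (L * t) := hgap
    _ ≤ dist x x₀ * exp (L * b) := by gcongr; exact ht.2
    _ < min ε 1 := hx
    _ ≤ ε := min_le_left _ _

theorem exists_pos_forall_Ico_add_lt {ψ : ℝ → ℝ} {a b c : ℝ} (hψ : ContinuousAt ψ b)
    (hab : a ≤ b) (hlt : ∀ t ∈ Icc a b, ψ t < c) : ∃ η > 0, ∀ t ∈ Ico a (b + η), ψ t < c := by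
  obtain ⟨η, hη, hball⟩ :=
    Metric.eventually_nhds_iff.1 (hψ.eventually (gt_mem_nhds (hlt b ⟨hab, le_rfl⟩)))
  refine ⟨η, hη, fun t ht => ?_⟩
  rcases le_or_gt t b with htb | hbt
  · exact hlt t ⟨ht.1, htb⟩
  · exact hball (by rw [Real.dist_eq, abs_lt]; constructor <;> linarith [ht.2])

theorem stmt_3_general (n : ℕ)
    (f : EuclideanSpace ℝ (Fin n) → EuclideanSpace ℝ (Fin n))
    (hf : ContDiff ℝ 1 f)
    (φ : ℝ → EuclideanSpace ℝ (Fin n) → EuclideanSpace ℝ (Fin n))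
    (hφ0 : ∀ x, φ 0 x = x)
    (hφ' : ∀ (t : ℝ) (x : EuclideanSpace ℝ (Fin n)),
      HasDerivAt (fun s => φ s x) (f (φ t x)) t)
    (O : Set (EuclideanSpace ℝ (Fin n)))
    (T : EuclideanSpace ℝ (Fin n) → ℝ≥0∞)
    (xstar : EuclideanSpace ℝ (Fin n))
    (hTfin : T xstar ≠ ⊤)
    (hTcont : ContinuousAt T xstar)
    (hflow : ∀ t ∈ Icc (0:ℝ) (T xstar).toReal, φ t xstar ∈ O)
    (d : EuclideanSpace ℝ (Fin n) → ℝ)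
    (hd : ∀ x, T x ≠ ⊤ →
      d x = sSup ((fun t => infDist (φ t x) O) '' Icc (0:ℝ) (T x).toReal)) :
    d xstar = 0 ∧
    ∀ ε > 0, ∃ δ > 0, ∀ x : EuclideanSpace ℝ (Fin n), ‖x - xstar‖ < δ →
      T x ≠ ⊤ ∧ d x ≤ ε := by
  set T₀ := (T xstar).toReal
  have hγ : Continuous fun t => φ t xstar :=
    continuous_iff_continuousAt.2 fun t => (hφ' t xstar).continuousAt
  refine ⟨?_, fun ε hε => ?_⟩
  · rw [hd xstar hTfin, image_congr fun t ht => infDist_zero_of_mem (hflow t ht),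
      (nonempty_Icc.2 toReal_nonneg).image_const, csSup_singleton]
  obtain ⟨η, hη, hnear⟩ := exists_pos_forall_Ico_add_lt (c := ε / 2)
    ((continuous_infDist_pt O).comp hγ).continuousAt toReal_nonneg
    fun t ht => by simpa [infDist_zero_of_mem (hflow t ht)] using half_pos hε
  have hTη : ∀ᶠ x in 𝓝 xstar, T x < ENNReal.ofReal (T₀ + η) :=
    hTcont.eventually (gt_mem_nhds ((lt_ofReal_iff_toReal_lt hTfin).2 (by linarith)))
  obtain ⟨δ, hδ, hx⟩ := Metric.eventually_nhds_iff.1 (hTη.and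
    (eventually_forall_Icc_dist_flow_lt hf.locallyLipschitz hφ0 hφ' xstar (T₀ + η) (half_pos hε)))
  refine ⟨δ, hδ, fun x hxδ => ?_⟩
  obtain ⟨hTx, hclose⟩ := hx (by rwa [dist_eq_norm])
  refine ⟨ne_top_of_lt hTx, ?_⟩
  rw [hd x (ne_top_of_lt hTx)]
  refine Real.sSup_le (forall_mem_image.2 fun t ht => ?_) hε.le
  have htη : t ∈ Ico 0 (T₀ + η) := ⟨ht.1, ht.2.trans_lt (toReal_lt_of_lt_ofReal hTx)⟩
  calc infDist (φ t x) O ≤ infDist (φ t xstar) O + dist (φ t x) (φ t xstar) :=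
        infDist_le_infDist_add_dist
    _ ≤ ε / 2 + ε / 2 := add_le_add (hnear t htη).le (hclose t (Ico_subset_Icc_self htη)).le
    _ = ε := add_halves ε

/-- Well-definedness and continuity at a point of the limit cycle of the "distance"
function `d(x) = sup_{t ∈ [0, T(x)]} dist(φ(t,x), 𝒪)`, where `T` is a time function
that is finite and continuous at `xstar ∈ 𝒪` and the flow from `xstar` stays in the
compact set `𝒪` up to time `T(xstar)`. -/
theorem stmt_3 (n : ℕ) (hn : 1 ≤ n)
    (f : EuclideanSpace ℝ (Fin n) → EuclideanSpace ℝ (Fin n))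
    (hf : ContDiff ℝ 1 f)
    (φ : ℝ → EuclideanSpace ℝ (Fin n) → EuclideanSpace ℝ (Fin n))
    (hφ0 : ∀ x, φ 0 x = x)
    (hφ' : ∀ (t : ℝ) (x : EuclideanSpace ℝ (Fin n)),
      HasDerivAt (fun s => φ s x) (f (φ t x)) t)
    (O : Set (EuclideanSpace ℝ (Fin n))) (hO : IsCompact O) (hOne : O.Nonempty)
    (T : EuclideanSpace ℝ (Fin n) → ℝ≥0∞)
    (xstar : EuclideanSpace ℝ (Fin n)) (hxO : xstar ∈ O)
    (hTfin : T xstar ≠ ⊤)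
    (hTcont : ContinuousAt T xstar)
    (hflow : ∀ t ∈ Icc (0:ℝ) (T xstar).toReal, φ t xstar ∈ O)
    (d : EuclideanSpace ℝ (Fin n) → ℝ)
    (hd : ∀ x, T x ≠ ⊤ →
      d x = sSup ((fun t => infDist (φ t x) O) '' Icc (0:ℝ) (T x).toReal)) :
    d xstar = 0 ∧
    ∀ ε > 0, ∃ δ > 0, ∀ x : EuclideanSpace ℝ (Fin n), ‖x - xstar‖ < δ →
      T x ≠ ⊤ ∧ d x ≤ ε :=
  stmt_3_general n f hf φ hφ0 hφ' O T xstar hTfin hTcont hflow d hd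
end

section
/- Let S ⊆ ℝ^n be compact and P : S → S continuous. For every compact set K ⊆ S, every ε > 0, and every J ∈ ℕ there exists δ > 0 with the following property: for every N ≤ J and every finite δ-perturbed sequence y₀, y₁, …, y_N of P with y₀ ∈ K + δ𝔹, there exists x ∈ S such that |y_j − P^j(x)| ≤ ε for every 0 ≤ j ≤ N, where P^j denotes the j-fold composition of P. -/
open Set Metric Filter

/-- Closeness, on compact discrete-time horizons, between exact solutions of the
Poincaré iteration `x⁺ = P(x)`, `x ∈ S`, and its `δ`-perturbed sequences. -/
theorem stmt_6 (n : ℕ) (hn : 1 ≤ n)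
    (S : Set (EuclideanSpace ℝ (Fin n))) (hS : IsCompact S)
    (P : EuclideanSpace ℝ (Fin n) → EuclideanSpace ℝ (Fin n))
    (hPmaps : MapsTo P S S) (hPcont : ContinuousOn P S) :
    ∀ K : Set (EuclideanSpace ℝ (Fin n)), K ⊆ S → IsCompact K →
    ∀ ε > (0:ℝ), ∀ J : ℕ, ∃ δ > (0:ℝ),
      ∀ N : ℕ, N ≤ J →
      ∀ y : ℕ → EuclideanSpace ℝ (Fin n),
        (∃ z ∈ K, dist (y 0) z ≤ δ) →
        (∀ j < N, ∃ z ∈ closedBall (y j) δ ∩ S, dist (y (j+1)) (P z) ≤ δ) →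
        ∃ x ∈ S, ∀ j ≤ N, dist (y j) (P^[j] x) ≤ ε := by
  intro K hKS hK ε hε J
  -- uniform continuity of P on S
  have huc : ∀ r : ℝ, 0 < r → ∃ η > (0:ℝ), ∀ x ∈ S, ∀ z ∈ S,
      dist x z ≤ η → dist (P x) (P z) ≤ r := by
    have h := hS.uniformContinuousOn_of_continuous hPcont
    rw [Metric.uniformContinuousOn_iff_le] at h
    intro r hr
    obtain ⟨η, hη, hη'⟩ := h r hr
    exact ⟨η, hη, fun x hx z hz hd => hη' x hx z hz hd⟩
  choose! η hηpos hη using huc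
  -- the recursive chain of tolerances
  let f : ℕ → ℝ := fun k => Nat.rec ε (fun _ fk => min (fk / 2) (η (fk / 2) / 2)) k
  have hf0 : f 0 = ε := rfl
  have hfsucc : ∀ k, f (k + 1) = min (f k / 2) (η (f k / 2) / 2) := fun k => rfl
  have hfpos : ∀ k, 0 < f k := by
    intro k
    induction k with
    | zero => exact hε
    | succ k ih =>
      rw [hfsucc]
      exact lt_min (by linarith) (by have := hηpos (f k / 2) (by linarith); linarith)
  have hfstep : ∀ k, f (k + 1) ≤ f k / 2 := fun k => (hfsucc k) ▸ min_le_left _ _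
  have hanti : Antitone f := antitone_nat_of_succ_le (fun k => le_trans (hfstep k)
    (by have := hfpos k; linarith))
  refine ⟨f J, hfpos J, ?_⟩
  intro N hN y ⟨z, hzK, hz0⟩ hpert
  have hzS : z ∈ S := hKS hzK
  have hxS : ∀ j, P^[j] z ∈ S := fun j => (hPmaps.iterate j) hzS
  have key : ∀ j, j ≤ N → dist (y j) (P^[j] z) ≤ f (J - j) := by
    intro j
    induction j with
    | zero => intro _; simpa using hz0
    | succ j ih =>
      intro hj
      have hjN : j < N := hj
      obtain ⟨w, ⟨hw1, hw2⟩, hw3⟩ := hpert j hjN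
      have h1 : dist (y j) (P^[j] z) ≤ f (J - j) := ih (le_of_lt hjN)
      have hδle : f J ≤ f (J - j) := hanti (Nat.sub_le J j)
      have hw1' : dist w (y j) ≤ f J := mem_closedBall.mp hw1
      have h2 : dist w (P^[j] z) ≤ 2 * f (J - j) :=
        calc dist w (P^[j] z) ≤ dist w (y j) + dist (y j) (P^[j] z) := dist_triangle _ _ _
          _ ≤ 2 * f (J - j) := by linarith
      have hjJ : j + 1 ≤ J := le_trans hj hN
      have hsub : J - j = (J - (j + 1)) + 1 := by omega
      have hle : f (J - j) ≤ η (f (J - (j + 1)) / 2) / 2 := by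
        rw [hsub, hfsucc]; exact min_le_right _ _
      have hpos' : 0 < f (J - (j + 1)) / 2 := by have := hfpos (J - (j + 1)); linarith
      have h3 : dist (P w) (P (P^[j] z)) ≤ f (J - (j + 1)) / 2 :=
        hη (f (J - (j + 1)) / 2) hpos' w hw2 _ (hxS j) (by linarith)
      have hδle2 : f J ≤ f (J - (j + 1)) / 2 := by
        have hle' : J - (j + 1) + 1 ≤ J := by omega
        calc f J ≤ f (J - (j + 1) + 1) := hanti hle'
          _ ≤ f (J - (j + 1)) / 2 := hfstep _
      have : dist (y (j + 1)) (P (P^[j] z)) ≤ f (J - (j + 1)) :=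
        calc dist (y (j + 1)) (P (P^[j] z))
            ≤ dist (y (j + 1)) (P w) + dist (P w) (P (P^[j] z)) := dist_triangle _ _ _
          _ ≤ f (J - (j + 1)) := by linarith
      rwa [Function.iterate_succ_apply']
  refine ⟨z, hzS, fun j hj => ?_⟩
  have := key j hj
  have : f (J - j) ≤ ε := hf0 ▸ hanti (Nat.zero_le _)
  linarith [key j hj]
end

section
/- Let S ⊆ ℝ^n be compact, P : S → S continuous, and x* ∈ S a fixed point of P that is stable and globally attractive on S. Then there exists a class-KL function β with β(s,0) ≥ s for all s ≥ 0 such that |P^k(x) − x*| ≤ β(|x − x*|, k) for every x ∈ S and every k ∈ ℕ, where P^k denotes the k-fold composition of P. -/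
/-!
Two monotone envelopes of the orbits control everything: `g s`, the largest distance from `x*`
reached by an orbit that starts in `S` within `s` of `x*`, and `w k`, the largest distance from
`x*` of a point of `P^k(S)`. Stability says exactly that `g s → 0` as `s → 0`. Compactness turns
pointwise attraction into uniform attraction: the open sets on which some iterate is `δ`-close to
`x*` cover `S`, a finite subcover gives one time after which every orbit is `δ`-close once, and
stability keeps it `ε`-close afterwards; hence `w k → 0`. Every orbit obeys
`|P^k x - x*| ≤ min (g |x - x*|) (w k)`, and this is dominated by
`β s t = min (s + ĝ s) (ŵ t + s e^{-t})`, where `ĝ s = ∫₁² g (s v) dv` and `ŵ t = ∫₀¹ w ⌈t - v⌉ dv`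
are continuous averages of the monotone functions `g` and `w`; the terms `s` and `s e^{-t}` give
`β s 0 ≥ s`.
-/

open Set Metric Filter

/-- A function `β : [0,∞) × [0,∞) → [0,∞)` of class `KL`: continuous, zero at `s = 0`,
nondecreasing in `s`, and nonincreasing in `t` with limit `0` at infinity. -/
def IsClassKL (β : ℝ → ℝ → ℝ) : Prop :=
  ContinuousOn (fun q : ℝ × ℝ => β q.1 q.2) (Set.Ici 0 ×ˢ Set.Ici 0) ∧
  (∀ s t : ℝ, 0 ≤ s → 0 ≤ t → 0 ≤ β s t) ∧
  (∀ t : ℝ, 0 ≤ t → β 0 t = 0) ∧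
  (∀ t : ℝ, 0 ≤ t → MonotoneOn (fun s => β s t) (Set.Ici 0)) ∧
  (∀ s : ℝ, 0 ≤ s → AntitoneOn (fun t => β s t) (Set.Ici 0)) ∧
  (∀ s : ℝ, 0 ≤ s → Tendsto (fun t => β s t) atTop (nhds 0))

open Topology intervalIntegral MeasureTheory

noncomputable def dilationAverage (g : ℝ → ℝ) (s : ℝ) : ℝ := ∫ v in (1:ℝ)..2, g (s * v)

noncomputable def windowAverage (w : ℝ → ℝ) (t : ℝ) : ℝ := ∫ v in (0:ℝ)..1, w (t - v)

section dilationAverage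

variable {g : ℝ → ℝ}

theorem Monotone.intervalIntegrable_comp_mul (hg : Monotone g) {s : ℝ} (hs : 0 ≤ s) (a b : ℝ) :
    IntervalIntegrable (fun v => g (s * v)) volume a b :=
  (hg.comp (monotone_mul_left_of_nonneg hs)).intervalIntegrable

theorem le_dilationAverage (hg : Monotone g) {s : ℝ} (hs : 0 ≤ s) :
    g s ≤ dilationAverage g s := by
  calc g s = ∫ _ in (1:ℝ)..2, g s := by norm_num
    _ ≤ dilationAverage g s :=
      integral_mono_on (by norm_num) intervalIntegrable_const
        (hg.intervalIntegrable_comp_mul hs 1 2) fun v hv => hg (le_mul_of_one_le_right hs hv.1)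

theorem dilationAverage_le (hg : Monotone g) {s : ℝ} (hs : 0 ≤ s) :
    dilationAverage g s ≤ g (2 * s) := by
  calc dilationAverage g s ≤ ∫ _ in (1:ℝ)..2, g (2 * s) :=
      integral_mono_on (by norm_num) (hg.intervalIntegrable_comp_mul hs 1 2)
        intervalIntegrable_const fun v hv => hg (by nlinarith [hv.2])
    _ = g (2 * s) := by norm_num

theorem monotoneOn_dilationAverage (hg : Monotone g) : MonotoneOn (dilationAverage g) (Ici 0) :=
  fun a ha b hb hab =>
    integral_mono_on (by norm_num) (hg.intervalIntegrable_comp_mul ha 1 2)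
      (hg.intervalIntegrable_comp_mul hb 1 2)
      fun v hv => hg (mul_le_mul_of_nonneg_right hab (zero_le_one.trans hv.1))

theorem dilationAverage_eq_inv_mul_integral (g : ℝ → ℝ) {s : ℝ} (hs : s ≠ 0) :
    dilationAverage g s = s⁻¹ * ∫ u in s..2 * s, g u := by
  rw [dilationAverage, integral_comp_mul_left _ hs, smul_eq_mul, mul_one, mul_comm s 2]

theorem continuousWithinAt_dilationAverage_zero (hg : Monotone g)
    (hg0 : ContinuousWithinAt g (Ici 0) 0) : ContinuousWithinAt (dilationAverage g) (Ici 0) 0 := by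
  have h2 : Tendsto (fun u : ℝ => g (2 * u)) (𝓝[≥] 0) (𝓝 (g 0)) := by
    refine hg0.tendsto.comp (tendsto_nhdsWithin_of_tendsto_nhds_of_eventually_within _ ?_ ?_)
    · simpa using ((continuous_const_mul (2:ℝ)).tendsto 0).mono_left nhdsWithin_le_nhds
    · filter_upwards [self_mem_nhdsWithin] with u (hu : 0 ≤ u) using mul_nonneg zero_le_two hu
  have h0 : dilationAverage g 0 = g 0 := by norm_num [dilationAverage]
  rw [ContinuousWithinAt, h0]
  refine tendsto_of_tendsto_of_tendsto_of_le_of_le' tendsto_const_nhds h2 ?_ ?_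
  · filter_upwards [self_mem_nhdsWithin] with u (hu : 0 ≤ u)
    exact h0 ▸ monotoneOn_dilationAverage hg self_mem_Ici hu hu
  · filter_upwards [self_mem_nhdsWithin] with u (hu : 0 ≤ u) using dilationAverage_le hg hu

theorem continuousAt_dilationAverage (hg : Monotone g) {s : ℝ} (hs : 0 < s) :
    ContinuousAt (dilationAverage g) s := by
  have hF : Continuous fun b => ∫ u in (0:ℝ)..b, g u :=
    continuous_primitive (fun _ _ => hg.intervalIntegrable) 0
  have h : ∀ u : ℝ,
      ∫ x in u..2 * u, g x = (∫ x in (0:ℝ)..2 * u, g x) - ∫ x in (0:ℝ)..u, g x := fun u =>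
    (integral_interval_sub_left hg.intervalIntegrable hg.intervalIntegrable).symm
  have hcont : ContinuousAt (fun u : ℝ => u⁻¹ * ∫ x in u..2 * u, g x) s := by
    simp only [h]
    exact (continuousAt_inv₀ hs.ne').mul ((hF.comp (continuous_const_mul 2)).sub hF).continuousAt
  refine hcont.congr ?_
  filter_upwards [eventually_ne_nhds hs.ne'] with u hu
  exact (dilationAverage_eq_inv_mul_integral g hu).symm

theorem continuousOn_dilationAverage (hg : Monotone g) (hg0 : ContinuousWithinAt g (Ici 0) 0) :
    ContinuousOn (dilationAverage g) (Ici 0) := by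
  intro s hs
  rcases (mem_Ici.mp hs).eq_or_lt with rfl | hpos
  · exact continuousWithinAt_dilationAverage_zero hg hg0
  · exact (continuousAt_dilationAverage hg hpos).continuousWithinAt

end dilationAverage

section windowAverage

variable {w : ℝ → ℝ}

theorem Antitone.intervalIntegrable_comp_sub (hw : Antitone w) (t a b : ℝ) :
    IntervalIntegrable (fun v => w (t - v)) volume a b :=
  (hw.comp fun _ _ h => sub_le_sub_left h t).intervalIntegrable

theorem le_windowAverage (hw : Antitone w) (t : ℝ) : w t ≤ windowAverage w t := by
  calc w t = ∫ _ in (0:ℝ)..1, w t := by simp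
    _ ≤ windowAverage w t :=
      integral_mono_on zero_le_one intervalIntegrable_const
        (hw.intervalIntegrable_comp_sub t 0 1) fun v hv => hw (by linarith [hv.1])

theorem windowAverage_le (hw : Antitone w) (t : ℝ) : windowAverage w t ≤ w (t - 1) := by
  calc windowAverage w t ≤ ∫ _ in (0:ℝ)..1, w (t - 1) :=
      integral_mono_on zero_le_one (hw.intervalIntegrable_comp_sub t 0 1)
        intervalIntegrable_const fun v hv => hw (by linarith [hv.2])
    _ = w (t - 1) := by simp

theorem antitone_windowAverage (hw : Antitone w) : Antitone (windowAverage w) :=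
  fun a b hab => integral_mono_on zero_le_one (hw.intervalIntegrable_comp_sub b 0 1)
    (hw.intervalIntegrable_comp_sub a 0 1) fun _ _ => hw (by linarith)

theorem continuous_windowAverage (hw : Antitone w) : Continuous (windowAverage w) := by
  have hF : Continuous fun b => ∫ u in (0:ℝ)..b, w u :=
    continuous_primitive (fun _ _ => hw.intervalIntegrable) 0
  have h : windowAverage w = fun t => (∫ u in (0:ℝ)..t, w u) - ∫ u in (0:ℝ)..(t - 1), w u := by
    ext t
    rw [windowAverage, integral_comp_sub_left, sub_zero,
      integral_interval_sub_left hw.intervalIntegrable hw.intervalIntegrable]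
  rw [h]
  exact hF.sub (hF.comp (continuous_sub_right 1))

end windowAverage

theorem isClassKL_min_add {G R : ℝ → ℝ} (hGc : ContinuousOn G (Ici 0))
    (hGm : MonotoneOn G (Ici 0)) (hG0 : G 0 = 0) (hRc : Continuous R) (hRa : Antitone R)
    (hR0 : Tendsto R atTop (𝓝 0)) :
    IsClassKL fun s t => min (s + G s) (R t + s * Real.exp (-t)) := by
  have hG : ∀ s, 0 ≤ s → 0 ≤ G s := fun s hs => hG0 ▸ hGm self_mem_Ici hs hs
  have hR : ∀ t, 0 ≤ R t := hRa.le_of_tendsto hR0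
  have hnonneg : ∀ s t, 0 ≤ s → 0 ≤ min (s + G s) (R t + s * Real.exp (-t)) := fun s t hs =>
    le_min (add_nonneg hs (hG s hs)) (add_nonneg (hR t) (by positivity))
  refine ⟨?_, fun s t hs _ => hnonneg s t hs, fun t _ => ?_, fun t _ a ha b hb hab => ?_,
    fun s hs a _ b _ hab => ?_, fun s hs => ?_⟩
  · refine (continuousOn_fst.add (hGc.comp continuousOn_fst fun q hq => hq.1)).inf ?_
    exact ((hRc.comp continuous_snd).add
      (continuous_fst.mul (Real.continuous_exp.comp continuous_snd.neg))).continuousOn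
  · simp [hG0, hR t]
  · exact min_le_min (add_le_add hab (hGm ha hb hab)) (by gcongr)
  · exact min_le_min le_rfl (add_le_add (hRa hab) (by gcongr))
  · refine squeeze_zero (fun t => hnonneg s t hs) (fun t => min_le_right _ _) ?_
    simpa using hR0.add (Real.tendsto_exp_neg_atTop_nhds_zero.const_mul s)

theorem exists_isClassKL_min_le {g : ℝ → ℝ} (hg : Monotone g) (hg0 : Tendsto g (𝓝[≥] 0) (𝓝 0))
    {w : ℕ → ℝ} (hw : Antitone w) (hw0 : Tendsto w atTop (𝓝 0)) :
    ∃ β : ℝ → ℝ → ℝ, IsClassKL β ∧ (∀ s, 0 ≤ s → s ≤ β s 0) ∧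
      ∀ s, 0 ≤ s → ∀ k : ℕ, min (g s) (w k) ≤ β s k := by
  have hg00 : g 0 = 0 :=
    tendsto_nhds_unique (tendsto_pure_nhds g 0) (hg0.mono_left (pure_le_nhdsWithin self_mem_Ici))
  set W : ℝ → ℝ := fun t => w ⌈t⌉₊
  have hW : Antitone W := hw.comp_monotone Nat.ceil_mono
  have hW0 : Tendsto W atTop (𝓝 0) := hw0.comp tendsto_nat_ceil_atTop
  refine ⟨_, isClassKL_min_add
    (continuousOn_dilationAverage hg (by rwa [ContinuousWithinAt, hg00]))
    (monotoneOn_dilationAverage hg) (by simp [dilationAverage, hg00]) (continuous_windowAverage hW)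
    (antitone_windowAverage hW) ?_, fun s hs => ?_, fun s hs k => ?_⟩
  · exact squeeze_zero (fun t => (hW.le_of_tendsto hW0 t).trans (le_windowAverage hW t))
      (windowAverage_le hW) (hW0.comp (tendsto_atTop_add_const_right _ (-1) tendsto_id))
  · have hρ : 0 ≤ windowAverage W 0 := (hW.le_of_tendsto hW0 0).trans (le_windowAverage hW 0)
    have hĝ : 0 ≤ dilationAverage g s := hg00 ▸ (hg hs).trans (le_dilationAverage hg hs)
    simp only [neg_zero, Real.exp_zero, mul_one]
    exact le_min (le_add_of_nonneg_right hĝ) (le_add_of_nonneg_left hρ)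
  · have hwk : w k ≤ windowAverage W k := by
      simpa [W] using le_windowAverage hW k
    exact min_le_min ((le_dilationAverage hg hs).trans (le_add_of_nonneg_left hs))
      (hwk.trans (le_add_of_nonneg_right (by positivity)))

section supDist

variable {X : Type*} [PseudoMetricSpace X]

-- `sSup` of an empty or unbounded set of reals is `0`; only bounded `A` are used.
noncomputable def supDist (x₀ : X) (A : Set X) : ℝ := sSup ((dist · x₀) '' A)

variable {x₀ : X} {A B : Set X}

theorem supDist_nonneg : 0 ≤ supDist x₀ A :=
  Real.sSup_nonneg <| forall_mem_image.2 fun _ _ => dist_nonneg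

theorem le_supDist (hA : Bornology.IsBounded A) {x : X} (hx : x ∈ A) :
    dist x x₀ ≤ supDist x₀ A := by
  obtain ⟨r, hr⟩ := (isBounded_iff_subset_closedBall x₀).1 hA
  exact le_csSup ⟨r, forall_mem_image.2 fun y hy => hr hy⟩ (mem_image_of_mem _ hx)

theorem supDist_le {r : ℝ} (hr : 0 ≤ r) (h : ∀ x ∈ A, dist x x₀ ≤ r) : supDist x₀ A ≤ r :=
  Real.sSup_le (forall_mem_image.2 h) hr

theorem supDist_mono (hB : Bornology.IsBounded B) (h : A ⊆ B) : supDist x₀ A ≤ supDist x₀ B :=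
  supDist_le supDist_nonneg fun _ hx => le_supDist hB (h hx)

end supDist

section Radii

variable {X : Type*} [PseudoMetricSpace X] {P : X → X} {S : Set X} {x₀ : X}

noncomputable def orbitRadius (P : X → X) (S : Set X) (x₀ : X) (s : ℝ) : ℝ :=
  supDist x₀ (⋃ k : ℕ, P^[k] '' (S ∩ closedBall x₀ s))

noncomputable def iterateRadius (P : X → X) (S : Set X) (x₀ : X) (k : ℕ) : ℝ :=
  supDist x₀ (P^[k] '' S)

theorem isBounded_iUnion_iterate_image (hS : Bornology.IsBounded S) (hP : MapsTo P S S)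
    {T : Set X} (hT : T ⊆ S) : Bornology.IsBounded (⋃ k : ℕ, P^[k] '' T) :=
  hS.subset <| iUnion_subset fun k => ((hP.iterate k).mono_left hT).image_subset

theorem monotone_orbitRadius (hS : Bornology.IsBounded S) (hP : MapsTo P S S) :
    Monotone (orbitRadius P S x₀) := fun _ _ hab =>
  supDist_mono (isBounded_iUnion_iterate_image hS hP inter_subset_left) <|
    iUnion_mono fun _ => image_mono <| inter_subset_inter_right _ (closedBall_subset_closedBall hab)

theorem dist_iterate_le_orbitRadius (hS : Bornology.IsBounded S) (hP : MapsTo P S S) {x : X}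
    (hx : x ∈ S) (k : ℕ) : dist (P^[k] x) x₀ ≤ orbitRadius P S x₀ (dist x x₀) :=
  le_supDist (isBounded_iUnion_iterate_image hS hP inter_subset_left)
    (mem_iUnion.2 ⟨k, mem_image_of_mem _ ⟨hx, mem_closedBall.2 le_rfl⟩⟩)

theorem tendsto_orbitRadius
    (hstable : ∀ ε > (0:ℝ), ∃ δ > (0:ℝ), ∀ x ∈ S, dist x x₀ ≤ δ → ∀ k : ℕ, dist (P^[k] x) x₀ ≤ ε) :
    Tendsto (orbitRadius P S x₀) (𝓝[≥] 0) (𝓝 0) := by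
  rw [Metric.tendsto_nhdsWithin_nhds]
  intro ε hε
  obtain ⟨δ, hδ, hδε⟩ := hstable (ε / 2) (half_pos hε)
  refine ⟨δ, hδ, fun s _ hs => ?_⟩
  rw [Real.dist_eq, sub_zero, abs_of_nonneg (by exact supDist_nonneg)]
  refine (supDist_le (half_pos hε).le fun y hy => ?_).trans_lt (half_lt_self hε)
  obtain ⟨k, x, ⟨hx, hxs⟩, rfl⟩ := mem_iUnion.1 hy
  have hsδ : s < δ := (le_abs_self s).trans_lt (Real.dist_0_eq_abs s ▸ hs)
  exact hδε x hx ((mem_closedBall.1 hxs).trans hsδ.le) k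

theorem antitone_iterateRadius (hS : Bornology.IsBounded S) (hP : MapsTo P S S) :
    Antitone (iterateRadius P S x₀) := by
  intro k j hkj
  obtain ⟨m, rfl⟩ := Nat.exists_eq_add_of_le hkj
  refine supDist_mono (hS.subset (hP.iterate k).image_subset) ?_
  rw [Function.iterate_add, image_comp]
  exact image_mono (hP.iterate m).image_subset

theorem dist_iterate_le_iterateRadius (hS : Bornology.IsBounded S) (hP : MapsTo P S S) {x : X}
    (hx : x ∈ S) (k : ℕ) : dist (P^[k] x) x₀ ≤ iterateRadius P S x₀ k :=
  le_supDist (hS.subset (hP.iterate k).image_subset) (mem_image_of_mem _ hx)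

theorem exists_iterate_dist_le (hS : IsCompact S) (hP : MapsTo P S S) (hPc : ContinuousOn P S)
    (hstable : ∀ ε > (0:ℝ), ∃ δ > (0:ℝ), ∀ x ∈ S, dist x x₀ ≤ δ → ∀ k : ℕ, dist (P^[k] x) x₀ ≤ ε)
    (hattr : ∀ x ∈ S, Tendsto (fun k : ℕ => P^[k] x) atTop (𝓝 x₀)) {ε : ℝ} (hε : 0 < ε) :
    ∃ T : ℕ, ∀ x ∈ S, dist (P^[T] x) x₀ ≤ ε := by
  obtain ⟨δ, hδ, hδε⟩ := hstable ε hε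
  choose U hUo hU using fun N => continuousOn_iff'.1 (hPc.iterate hP N) (ball x₀ δ) isOpen_ball
  obtain ⟨t, ht⟩ := hS.elim_finite_subcover U hUo fun x hx => by
    obtain ⟨N, hN⟩ := ((hattr x hx).eventually (ball_mem_nhds x₀ hδ)).exists
    exact mem_iUnion.2 ⟨N, ((hU N).subset ⟨hN, hx⟩).1⟩
  refine ⟨t.sup id, fun x hx => ?_⟩
  obtain ⟨N, hNt, hxN⟩ := mem_iUnion₂.1 (ht hx)
  have hN : dist (P^[N] x) x₀ < δ := ((hU N).symm.subset ⟨hxN, hx⟩).1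
  obtain ⟨m, hm⟩ := Nat.exists_eq_add_of_le (t.le_sup (f := id) hNt)
  rw [hm, add_comm, Function.iterate_add_apply]
  exact hδε _ (hP.iterate N hx) hN.le m

theorem tendsto_iterateRadius (hS : IsCompact S) (hP : MapsTo P S S) (hPc : ContinuousOn P S)
    (hstable : ∀ ε > (0:ℝ), ∃ δ > (0:ℝ), ∀ x ∈ S, dist x x₀ ≤ δ → ∀ k : ℕ, dist (P^[k] x) x₀ ≤ ε)
    (hattr : ∀ x ∈ S, Tendsto (fun k : ℕ => P^[k] x) atTop (𝓝 x₀)) :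
    Tendsto (iterateRadius P S x₀) atTop (𝓝 0) := by
  rw [Metric.tendsto_atTop]
  intro ε hε
  obtain ⟨T, hT⟩ := exists_iterate_dist_le hS hP hPc hstable hattr (half_pos hε)
  refine ⟨T, fun k hk => ?_⟩
  rw [Real.dist_eq, sub_zero, abs_of_nonneg (by exact supDist_nonneg)]
  calc iterateRadius P S x₀ k ≤ iterateRadius P S x₀ T :=
        antitone_iterateRadius hS.isBounded hP hk
    _ ≤ ε / 2 := supDist_le (half_pos hε).le (forall_mem_image.2 hT)
    _ < ε := half_lt_self hε

end Radii

theorem exists_isClassKL_dist_iterate_le {X : Type*} [PseudoMetricSpace X] {P : X → X}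
    {S : Set X} {x₀ : X} (hS : IsCompact S) (hP : MapsTo P S S) (hPc : ContinuousOn P S)
    (hstable : ∀ ε > (0:ℝ), ∃ δ > (0:ℝ), ∀ x ∈ S, dist x x₀ ≤ δ → ∀ k : ℕ, dist (P^[k] x) x₀ ≤ ε)
    (hattr : ∀ x ∈ S, Tendsto (fun k : ℕ => P^[k] x) atTop (𝓝 x₀)) :
    ∃ β : ℝ → ℝ → ℝ, IsClassKL β ∧ (∀ s : ℝ, 0 ≤ s → s ≤ β s 0) ∧
      ∀ x ∈ S, ∀ k : ℕ, dist (P^[k] x) x₀ ≤ β (dist x x₀) k := by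
  obtain ⟨β, hβ, hβ_ge, hβ_min⟩ := exists_isClassKL_min_le
    (monotone_orbitRadius hS.isBounded hP) (tendsto_orbitRadius hstable)
    (antitone_iterateRadius hS.isBounded hP) (tendsto_iterateRadius hS hP hPc hstable hattr)
  refine ⟨β, hβ, hβ_ge, fun x hx k => le_trans ?_ (hβ_min _ dist_nonneg k)⟩
  exact le_min (dist_iterate_le_orbitRadius hS.isBounded hP hx k)
    (dist_iterate_le_iterateRadius hS.isBounded hP hx k)

theorem stmt_8_general (n : ℕ)
    (S : Set (EuclideanSpace ℝ (Fin n))) (hS : IsCompact S)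
    (P : EuclideanSpace ℝ (Fin n) → EuclideanSpace ℝ (Fin n))
    (hPmaps : MapsTo P S S) (hPcont : ContinuousOn P S)
    (xstar : EuclideanSpace ℝ (Fin n))
    (hstable : ∀ ε > (0:ℝ), ∃ δ > (0:ℝ), ∀ x ∈ S, dist x xstar ≤ δ →
      ∀ k : ℕ, dist (P^[k] x) xstar ≤ ε)
    (hattr : ∀ x ∈ S, Tendsto (fun k : ℕ => P^[k] x) atTop (nhds xstar)) :
    ∃ β : ℝ → ℝ → ℝ, IsClassKL β ∧ (∀ s : ℝ, 0 ≤ s → s ≤ β s 0) ∧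
      ∀ x ∈ S, ∀ k : ℕ, dist (P^[k] x) xstar ≤ β (dist x xstar) (k : ℝ) :=
  exists_isClassKL_dist_iterate_le hS hPmaps hPcont hstable hattr

/-- A stable and globally attractive fixed point of a continuous map `P : S → S` on a
compact set `S` admits a class-`KL` bound. -/
theorem stmt_8 (n : ℕ) (hn : 1 ≤ n)
    (S : Set (EuclideanSpace ℝ (Fin n))) (hS : IsCompact S)
    (P : EuclideanSpace ℝ (Fin n) → EuclideanSpace ℝ (Fin n))
    (hPmaps : MapsTo P S S) (hPcont : ContinuousOn P S)
    (xstar : EuclideanSpace ℝ (Fin n)) (hxS : xstar ∈ S)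
    (hfix : P xstar = xstar)
    (hstable : ∀ ε > (0:ℝ), ∃ δ > (0:ℝ), ∀ x ∈ S, dist x xstar ≤ δ →
      ∀ k : ℕ, dist (P^[k] x) xstar ≤ ε)
    (hattr : ∀ x ∈ S, Tendsto (fun k : ℕ => P^[k] x) atTop (nhds xstar)) :
    ∃ β : ℝ → ℝ → ℝ, IsClassKL β ∧ (∀ s : ℝ, 0 ≤ s → s ≤ β s 0) ∧
      ∀ x ∈ S, ∀ k : ℕ, dist (P^[k] x) xstar ≤ β (dist x xstar) (k : ℝ) :=
  stmt_8_general n S hS P hPmaps hPcont xstar hstable hattr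
end

section
/- Let S ⊆ ℝ^n be compact, P : S → S continuous, and x* ∈ S a fixed point of P that is stable and globally attractive on S. Then there exists a class-KL function β with β(s,0) ≥ s for all s ≥ 0 such that: (a) |P^k(x) − x*| ≤ β(|x − x*|, k) for every x ∈ S and k ∈ ℕ; and (b) for every ε > 0, every compact set K ⊆ ℝ^n, and every J ∈ ℕ there exists δ* > 0 such that for every δ ∈ (0, δ*], every δ-perturbed sequence (y_j) of P with y₀ ∈ K satisfies |y_j − x*| ≤ β(|y₀ − x*|, j) + ε for every index j with j ≤ J. -/
/-!
Stability gives a modulus `ν s`, the largest distance from `xstar` along orbits starting within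
`s` of it, and compactness upgrades global attractivity to uniform attractivity, giving a rate
`a t` bounding all orbits after time `t`. Sliding averages turn `ν` and `a` into continuous
class-`K` and class-`L` envelopes, which combine into a class-`KL` function `β ≥ min (ν s) (a t)`.
For part (b), uniform continuity of `P` on `S` keeps a `δ`-perturbed sequence within `ε / 2` of
the exact orbit of a nearby point of `S` up to a fixed horizon `J`, and uniform continuity of `β`
on a compact box absorbs the change of initial point.
-/

open Set Metric Filter

open Topology
open MeasureTheory (volume)

lemma continuous_intervalIntegral_of_forall_intervalIntegrable {f : ℝ → ℝ}
    (hf : ∀ a b, IntervalIntegrable f volume a b) {u v : ℝ → ℝ}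
    (hu : Continuous u) (hv : Continuous v) : Continuous fun t => ∫ x in u t..v t, f x := by
  have hF := intervalIntegral.continuous_primitive hf 0
  have h : (fun t => ∫ x in u t..v t, f x) =
      fun t => (∫ x in 0..v t, f x) - ∫ x in 0..u t, f x := by
    ext t
    exact (intervalIntegral.integral_interval_sub_left (hf _ _) (hf _ _)).symm
  rw [h]
  exact (hF.comp hv).sub (hF.comp hu)

lemma exists_classK_ge_of_tendsto {ν : ℝ → ℝ} (hν : Monotone ν)
    (hν0 : Tendsto ν (𝓝[≥] 0) (𝓝 0)) :
    ∃ α : ℝ → ℝ, ContinuousOn α (Ici 0) ∧ MonotoneOn α (Ici 0) ∧ α 0 = 0 ∧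
      ∀ s, 0 ≤ s → s ≤ α s ∧ ν s ≤ α s := by
  have hν00 : ν 0 = 0 :=
    pure_le_nhds_iff.mp ((hν0.mono_left (pure_le_nhdsWithin self_mem_Ici)).trans_eq' (by simp))
  have hint : ∀ {s}, 0 ≤ s → ∀ a b, IntervalIntegrable (fun u => ν (s * u)) volume a b :=
    fun hs _ _ => (hν.comp (monotone_mul_left_of_nonneg hs)).intervalIntegrable
  set α : ℝ → ℝ := fun s => s + ∫ u in (1:ℝ)..2, ν (s * u) with hα
  have hα0 : α 0 = 0 := by simp [hα, hν00]
  -- `α s - s` averages `ν` over `[s, 2 s]`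
  have hbounds : ∀ {s}, 0 ≤ s → s + ν s ≤ α s ∧ α s ≤ s + ν (2 * s) := fun {s} hs => by
    have hlower := intervalIntegral.integral_mono_on (by norm_num) intervalIntegrable_const
      (hint hs 1 2) fun u hu => hν (le_mul_of_one_le_right hs hu.1)
    have hupper := intervalIntegral.integral_mono_on (by norm_num) (hint hs 1 2)
      intervalIntegrable_const fun u hu => hν (show s * u ≤ 2 * s by nlinarith [hu.2])
    norm_num at hlower hupper
    exact ⟨by simpa [hα] using hlower, by simpa [hα] using hupper⟩
  refine ⟨α, ?_, ?_, hα0, fun s hs => ?_⟩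
  · intro s (hs : 0 ≤ s)
    rcases hs.eq_or_lt with rfl | hs
    · have h2 : Tendsto (fun s : ℝ => 2 * s) (𝓝[≥] 0) (𝓝[≥] 0) :=
        tendsto_nhdsWithin_of_tendsto_nhds_of_eventually_within _
          ((Continuous.tendsto' (by fun_prop) 0 0 (by simp)).mono_left nhdsWithin_le_nhds)
          (eventually_nhdsWithin_of_forall fun s (hs : 0 ≤ s) => mem_Ici.mpr (by positivity))
      have hup : Tendsto (fun s => s + ν (2 * s)) (𝓝[≥] 0) (𝓝 0) := by
        simpa using (tendsto_nhdsWithin_of_tendsto_nhds tendsto_id).add (hν0.comp h2)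
      rw [ContinuousWithinAt, hα0]
      refine tendsto_of_tendsto_of_tendsto_of_le_of_le' tendsto_const_nhds hup ?_ ?_ <;>
        filter_upwards [self_mem_nhdsWithin] with s (hs : 0 ≤ s)
      · linarith [(hbounds hs).1, hν00 ▸ hν hs]
      · exact (hbounds hs).2
    · have hscale : (fun t => t + t⁻¹ * ∫ x in t * 1..t * 2, ν x) =ᶠ[𝓝 s] α := by
        filter_upwards [eventually_ne_nhds hs.ne'] with t ht
        simp [hα, intervalIntegral.integral_comp_mul_left _ ht]
      refine (ContinuousAt.congr ?_ hscale).continuousWithinAt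
      exact continuousAt_id.add ((continuousAt_inv₀ hs.ne').mul
        (continuous_intervalIntegral_of_forall_intervalIntegrable
          (fun _ _ => hν.intervalIntegrable) (by fun_prop) (by fun_prop)).continuousAt)
  · intro s (hs : 0 ≤ s) s' _ hss'
    have := intervalIntegral.integral_mono_on (by norm_num) (hint hs 1 2) (hint (hs.trans hss') 1 2)
      fun u hu => hν (mul_le_mul_of_nonneg_right hss' (by linarith [hu.1]))
    simp only [hα]
    linarith
  · have := (hbounds hs).1
    have : 0 ≤ ν s := hν00 ▸ hν hs
    constructor <;> linarith

lemma exists_classL_ge_of_tendsto {a : ℝ → ℝ} (ha : Antitone a) (ha0 : Tendsto a atTop (𝓝 0)) :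
    ∃ φ : ℝ → ℝ, Continuous φ ∧ Antitone φ ∧ a ≤ φ ∧ Tendsto φ atTop (𝓝 0) := by
  have hint : ∀ t b c, IntervalIntegrable (fun u => a (u + t)) volume b c :=
    fun t _ _ => (ha.comp_monotone (monotone_id.add_const t)).intervalIntegrable
  set φ : ℝ → ℝ := fun t => ∫ u in (-1:ℝ)..0, a (u + t) with hφ
  have hbounds : ∀ t, a t ≤ φ t ∧ φ t ≤ a (t - 1) := fun t => by
    have hlower := intervalIntegral.integral_mono_on (by norm_num) intervalIntegrable_const
      (hint t (-1) 0) fun u hu => ha (show u + t ≤ t by linarith [hu.2])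
    have hupper := intervalIntegral.integral_mono_on (by norm_num) (hint t (-1) 0)
      intervalIntegrable_const fun u hu => ha (show t - 1 ≤ u + t by linarith [hu.1])
    simp only [intervalIntegral.integral_const, smul_eq_mul, sub_neg_eq_add, zero_add,
      one_mul] at hlower hupper
    exact ⟨hlower, hupper⟩
  refine ⟨φ, ?_, fun t t' htt' => ?_, fun t => (hbounds t).1, ?_⟩
  · have hshift : φ = fun t => ∫ x in -1 + t..0 + t, a x := by
      ext t; simp [hφ]
    rw [hshift]
    exact continuous_intervalIntegral_of_forall_intervalIntegrable
      (fun _ _ => ha.intervalIntegrable) (by fun_prop) (by fun_prop)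
  · exact intervalIntegral.integral_mono_on (by norm_num) (hint t' (-1) 0) (hint t (-1) 0)
      fun u _ => ha (by linarith)
  · refine tendsto_of_tendsto_of_tendsto_of_le_of_le ha0 ?_ (fun t => (hbounds t).1)
      fun t => (hbounds t).2
    exact ha0.comp (tendsto_atTop_add_const_right _ (-1) tendsto_id)

lemma exists_classKL_ge_min {ν a : ℝ → ℝ} (hν : Monotone ν) (hν0 : Tendsto ν (𝓝[≥] 0) (𝓝 0))
    (ha : Antitone a) (ha0 : Tendsto a atTop (𝓝 0)) :
    ∃ β : ℝ → ℝ → ℝ, IsClassKL β ∧ (∀ s, 0 ≤ s → s ≤ β s 0) ∧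
      ∀ s t, 0 ≤ s → min (ν s) (a t) ≤ β s t := by
  obtain ⟨α, hαc, hαm, hα0, hαge⟩ := exists_classK_ge_of_tendsto hν hν0
  obtain ⟨φ, hφc, hφm, haφ, hφ0⟩ := exists_classL_ge_of_tendsto ha ha0
  have hφnn : ∀ t, 0 ≤ φ t := hφm.le_of_tendsto hφ0
  -- the second term makes `β s 0 ≥ s` possible without spoiling the decay in `t`
  set β : ℝ → ℝ → ℝ := fun s t => min (α s) (φ t + s * max (1 - t) 0) with hβ
  have hβnn : ∀ s t, 0 ≤ s → 0 ≤ β s t := fun s t hs =>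
    le_min (hs.trans (hαge s hs).1) (add_nonneg (hφnn t) (mul_nonneg hs (le_max_right _ _)))
  refine ⟨β, ⟨?_, fun s t hs _ => hβnn s t hs, fun t _ => ?_, fun t _ => ?_, fun s hs => ?_,
    fun s hs => ?_⟩, fun s hs => ?_, fun s t hs => ?_⟩
  · have hαfst : ContinuousOn (fun q : ℝ × ℝ => α q.1) (Ici 0 ×ˢ Ici 0) :=
      hαc.comp continuousOn_fst fun q hq => hq.1
    exact hαfst.inf (Continuous.continuousOn (by fun_prop))
  · simp [hβ, hα0, hφnn]
  · intro s (hs : 0 ≤ s) s' (hs' : 0 ≤ s') hss'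
    exact min_le_min (hαm hs hs' hss') (by gcongr)
  · intro t (ht : 0 ≤ t) t' (ht' : 0 ≤ t') htt'
    exact min_le_min le_rfl (add_le_add (hφm htt') (by gcongr))
  · have hlin : Tendsto (fun t : ℝ => φ t + s * max (1 - t) 0) atTop (𝓝 0) := by
      have hramp : Tendsto (fun t : ℝ => s * max (1 - t) 0) atTop (𝓝 0) :=
        tendsto_const_nhds.congr' <| by
          filter_upwards [eventually_ge_atTop 1] with t ht
          simp [max_eq_right (by linarith : 1 - t ≤ 0)]
      simpa using hφ0.add hramp
    exact tendsto_of_tendsto_of_tendsto_of_le_of_le tendsto_const_nhds hlin (hβnn s · hs)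
      fun t => min_le_right _ _
  · exact le_min (hαge s hs).1 (by simp [hφnn 0])
  · exact min_le_min (hαge s hs).2
      ((haφ t).trans (le_add_of_nonneg_right (mul_nonneg hs (le_max_right _ _))))

lemma IsClassKL.exists_le_add {β : ℝ → ℝ → ℝ} (hβ : IsClassKL β) (R T : ℝ) {ε : ℝ} (hε : 0 < ε) :
    ∃ η > 0, ∀ s ∈ Icc 0 R, ∀ t ∈ Icc 0 T, ∀ s' ∈ Icc 0 (s + η), β s' t ≤ β s t + ε := by
  have hbox : IsCompact (Icc 0 (R + 1) ×ˢ Icc 0 T) := isCompact_Icc.prod isCompact_Icc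
  have hβu := hbox.uniformContinuousOn_of_continuous
    (hβ.1.mono (prod_mono Icc_subset_Ici_self Icc_subset_Ici_self))
  obtain ⟨η, hη, hβη⟩ := Metric.uniformContinuousOn_iff_le.mp hβu ε hε
  refine ⟨min 1 η, by positivity, fun s ⟨hs, hsR⟩ t ⟨ht, htT⟩ s' ⟨hs', hs's⟩ => ?_⟩
  rcases le_total s' s with hs's' | hss'
  · linarith [hβ.2.2.2.1 t ht hs' hs hs's']
  · have hdist : dist (s', t) (s, t) ≤ η := by
      rw [Prod.dist_eq, dist_self, Real.dist_eq, abs_of_nonneg (sub_nonneg.mpr hss'),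
        max_eq_left (sub_nonneg.mpr hss')]
      linarith [min_le_right 1 η]
    have hclose := hβη (s', t) ⟨⟨hs', by linarith [min_le_left 1 η]⟩, ⟨ht, htT⟩⟩ (s, t)
      ⟨⟨hs, by linarith⟩, ⟨ht, htT⟩⟩ hdist
    linarith [(abs_le.mp (Real.dist_eq (β s' t) (β s t) ▸ hclose)).2]

section Dynamics

variable {X : Type*} [PseudoMetricSpace X] {S : Set X} {P : X → X} {xstar : X}

theorem tendstoUniformlyOn_iterate_of_stable (hS : IsCompact S) (hPc : ContinuousOn P S)
    (hPS : MapsTo P S S)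
    (hstable : ∀ ε > (0:ℝ), ∃ δ > (0:ℝ), ∀ x ∈ S, dist x xstar ≤ δ →
      ∀ k : ℕ, dist (P^[k] x) xstar ≤ ε)
    (hattr : ∀ x ∈ S, Tendsto (fun k : ℕ => P^[k] x) atTop (𝓝 xstar)) :
    TendstoUniformlyOn (fun k => P^[k]) (fun _ => xstar) atTop S := by
  rw [← tendstoLocallyUniformlyOn_iff_tendstoUniformlyOn_of_compact hS,
    Metric.tendstoLocallyUniformlyOn_iff]
  intro ε hε x hx
  obtain ⟨δ, hδ, hδε⟩ := hstable (ε / 2) (half_pos hε)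
  obtain ⟨k, hk⟩ := ((hattr x hx).eventually (ball_mem_nhds xstar hδ)).exists
  -- once one iterate enters the `δ`-ball around `xstar`, stability keeps all later ones near it
  have hnear : P^[k] ⁻¹' ball xstar δ ∈ 𝓝[S] x :=
    (hPc.iterate hPS k x hx).preimage_mem_nhdsWithin (isOpen_ball.mem_nhds hk)
  refine ⟨_, inter_mem hnear self_mem_nhdsWithin, ?_⟩
  filter_upwards [eventually_ge_atTop k] with m hkm y ⟨hyk, hyS⟩
  have hsplit : P^[m] y = P^[m - k] (P^[k] y) := by
    rw [← Function.iterate_add_apply, Nat.sub_add_cancel hkm]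
  rw [dist_comm, hsplit]
  exact (hδε _ (hPS.iterate k hyS) (mem_ball.mp hyk).le _).trans_lt (half_lt_self hε)

lemma bddAbove_of_forall_eq_dist_iterate (hS : Bornology.IsBounded S) (hPS : MapsTo P S S)
    {T : Set ℝ} (hT : ∀ d ∈ T, ∃ x ∈ S, ∃ k : ℕ, dist (P^[k] x) xstar = d) : BddAbove T := by
  obtain ⟨r, hr⟩ := hS.subset_closedBall xstar
  refine ⟨r, fun d hd => ?_⟩
  obtain ⟨x, hx, k, rfl⟩ := hT d hd
  exact hr (hPS.iterate k hx)

-- `sSup ∅ = 0` in `ℝ`, the right value when no point of `S` is that close to `xstar`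
variable (S P xstar) in
noncomputable def stabilityModulus (s : ℝ) : ℝ :=
  sSup {d | ∃ x ∈ S, dist x xstar ≤ s ∧ ∃ k : ℕ, dist (P^[k] x) xstar = d}

variable (S P xstar) in
noncomputable def attractionModulus (t : ℝ) : ℝ :=
  sSup {d | ∃ x ∈ S, ∃ k : ℕ, t ≤ k ∧ dist (P^[k] x) xstar = d}

lemma stabilityModulus_nonneg (s : ℝ) : 0 ≤ stabilityModulus S P xstar s :=
  Real.sSup_nonneg <| by rintro _ ⟨x, -, -, k, rfl⟩; exact dist_nonneg

lemma attractionModulus_nonneg (t : ℝ) : 0 ≤ attractionModulus S P xstar t :=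
  Real.sSup_nonneg <| by rintro _ ⟨x, -, k, -, rfl⟩; exact dist_nonneg

lemma dist_iterate_le_stabilityModulus (hS : Bornology.IsBounded S) (hPS : MapsTo P S S)
    {x : X} (hx : x ∈ S) (k : ℕ) :
    dist (P^[k] x) xstar ≤ stabilityModulus S P xstar (dist x xstar) :=
  le_csSup (bddAbove_of_forall_eq_dist_iterate hS hPS fun _ ⟨y, hy, _, m, hm⟩ => ⟨y, hy, m, hm⟩)
    ⟨x, hx, le_rfl, k, rfl⟩

lemma dist_iterate_le_attractionModulus (hS : Bornology.IsBounded S) (hPS : MapsTo P S S)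
    {x : X} (hx : x ∈ S) (k : ℕ) :
    dist (P^[k] x) xstar ≤ attractionModulus S P xstar k :=
  le_csSup (bddAbove_of_forall_eq_dist_iterate hS hPS fun _ ⟨y, hy, m, _, hm⟩ => ⟨y, hy, m, hm⟩)
    ⟨x, hx, k, le_rfl, rfl⟩

lemma monotone_stabilityModulus (hS : Bornology.IsBounded S) (hPS : MapsTo P S S) :
    Monotone (stabilityModulus S P xstar) := fun _ s' hss' =>
  Real.sSup_le (fun _ ⟨x, hx, hxs, k, hk⟩ =>
    le_csSup (bddAbove_of_forall_eq_dist_iterate hS hPS fun _ ⟨y, hy, _, m, hm⟩ => ⟨y, hy, m, hm⟩)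
      ⟨x, hx, hxs.trans hss', k, hk⟩) (stabilityModulus_nonneg s')

lemma antitone_attractionModulus (hS : Bornology.IsBounded S) (hPS : MapsTo P S S) :
    Antitone (attractionModulus S P xstar) := fun t _ htt' =>
  Real.sSup_le (fun _ ⟨x, hx, k, hk, hd⟩ =>
    le_csSup (bddAbove_of_forall_eq_dist_iterate hS hPS fun _ ⟨y, hy, m, _, hm⟩ => ⟨y, hy, m, hm⟩)
      ⟨x, hx, k, htt'.trans hk, hd⟩) (attractionModulus_nonneg t)

lemma tendsto_stabilityModulus
    (hstable : ∀ ε > (0:ℝ), ∃ δ > (0:ℝ), ∀ x ∈ S, dist x xstar ≤ δ →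
      ∀ k : ℕ, dist (P^[k] x) xstar ≤ ε) :
    Tendsto (stabilityModulus S P xstar) (𝓝[≥] 0) (𝓝 0) := by
  rw [Metric.tendsto_nhdsWithin_nhds]
  intro ε hε
  obtain ⟨δ, hδ, hδε⟩ := hstable (ε / 2) (half_pos hε)
  refine ⟨δ, hδ, fun s _ hs => ?_⟩
  have hsδ : s ≤ δ := by simpa using (le_abs_self (s - 0)).trans_lt hs |>.le
  have hle : stabilityModulus S P xstar s ≤ ε / 2 := Real.sSup_le
    (fun _ ⟨x, hx, hxs, k, hk⟩ => hk ▸ hδε x hx (hxs.trans hsδ) k) (half_pos hε).le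
  rw [Real.dist_eq, sub_zero, abs_of_nonneg (stabilityModulus_nonneg s)]
  linarith

lemma tendsto_attractionModulus
    (h : TendstoUniformlyOn (fun k => P^[k]) (fun _ => xstar) atTop S) :
    Tendsto (attractionModulus S P xstar) atTop (𝓝 0) := by
  rw [Metric.tendsto_atTop]
  intro ε hε
  obtain ⟨T, hT⟩ := eventually_atTop.mp (Metric.tendstoUniformlyOn_iff.mp h (ε / 2) (half_pos hε))
  refine ⟨T, fun t ht => ?_⟩
  have hle : attractionModulus S P xstar t ≤ ε / 2 := Real.sSup_le
    (fun _ ⟨x, hx, k, hk, hd⟩ => hd ▸ dist_comm xstar (P^[k] x) ▸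
      (hT k (by exact_mod_cast ht.trans hk) x hx).le) (half_pos hε).le
  rw [Real.dist_eq, sub_zero, abs_of_nonneg (attractionModulus_nonneg t)]
  linarith

variable (S P) in
def IsPerturbedSeq (δ : ℝ) (N : ℕ) (y : ℕ → X) : Prop :=
  ∀ j < N, ∃ z ∈ closedBall (y j) δ ∩ S, dist (y (j + 1)) (P z) ≤ δ

theorem exists_forall_isPerturbedSeq_dist_iterate_le (hPu : UniformContinuousOn P S)
    (hPS : MapsTo P S S) (J : ℕ) {η : ℝ} (hη : 0 < η) :
    ∃ δstar > 0, ∀ δ ≤ δstar, ∀ N y, IsPerturbedSeq S P δ N y → ∀ z ∈ S, dist (y 0) z ≤ δ →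
      ∀ j ≤ N, j ≤ J → dist (y j) (P^[j] z) ≤ η := by
  induction J generalizing η with
  | zero =>
    refine ⟨η, hη, fun δ hδ N y _ z _ hz j _ hj => ?_⟩
    obtain rfl := Nat.le_zero.mp hj
    exact hz.trans hδ
  | succ J ih =>
    obtain ⟨θ, hθ, hPθ⟩ := Metric.uniformContinuousOn_iff_le.mp hPu (η / 2) (half_pos hη)
    obtain ⟨δ₁, hδ₁, hδ₁track⟩ := ih (lt_min (half_pos hη) (half_pos hθ))
    refine ⟨min δ₁ (min (η / 2) (θ / 2)), by positivity, fun δ hδ N y hy z hz hyz j hjN hj => ?_⟩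
    have hδ' := le_min_iff.mp (hδ.trans (min_le_right _ _))
    have htrack := hδ₁track δ (hδ.trans (min_le_left _ _)) N y hy z hz hyz
    rcases Nat.lt_or_ge j (J + 1) with hjJ | hjJ
    · exact (htrack j hjN (Nat.lt_succ_iff.mp hjJ)).trans ((min_le_left _ _).trans (by linarith))
    obtain rfl : j = J + 1 := le_antisymm hj hjJ
    obtain ⟨w, ⟨hw, hwS⟩, hyw⟩ := hy J hjN
    have hJ := le_min_iff.mp (htrack J (Nat.le_of_succ_le hjN) le_rfl)
    have hwP : dist w (P^[J] z) ≤ θ := by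
      linarith [dist_triangle w (y J) (P^[J] z), mem_closedBall.mp hw]
    have hPw := hPθ w hwS _ (hPS.iterate J hz) hwP
    rw [Function.iterate_succ_apply']
    linarith [dist_triangle (y (J + 1)) (P w) (P (P^[J] z))]

theorem exists_forall_isPerturbedSeq_dist_le_add {β : ℝ → ℝ → ℝ} (hβ : IsClassKL β)
    (hβ0 : ∀ s, 0 ≤ s → s ≤ β s 0)
    (hβP : ∀ x ∈ S, ∀ k : ℕ, dist (P^[k] x) xstar ≤ β (dist x xstar) k)
    (hPu : UniformContinuousOn P S) (hPS : MapsTo P S S) {ε : ℝ} (hε : 0 < ε) {K : Set X}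
    (hK : Bornology.IsBounded K) (J : ℕ) :
    ∃ δstar > 0, ∀ δ ∈ Ioc 0 δstar, ∀ N y, y 0 ∈ K → IsPerturbedSeq S P δ N y →
      ∀ j ≤ N, j ≤ J → dist (y j) xstar ≤ β (dist (y 0) xstar) j + ε := by
  obtain ⟨R, hR⟩ := hK.subset_closedBall xstar
  obtain ⟨η, hη, hβη⟩ := hβ.exists_le_add R J (half_pos hε)
  obtain ⟨δ₁, hδ₁, htrack⟩ :=
    exists_forall_isPerturbedSeq_dist_iterate_le hPu hPS J (half_pos hε)
  refine ⟨min δ₁ η, lt_min hδ₁ hη, fun δ ⟨_, hδ⟩ N y hy0 hy j hjN hjJ => ?_⟩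
  rcases Nat.eq_zero_or_pos j with rfl | hj
  · simpa using (hβ0 _ dist_nonneg).trans (le_add_of_nonneg_right hε.le)
  -- compare with the exact orbit of a point `z ∈ S` that the first computation step starts from
  obtain ⟨z, ⟨hz, hzS⟩, -⟩ := hy 0 (hj.trans_le hjN)
  have hzy : dist (y 0) z ≤ δ := mem_closedBall'.mp hz
  have hz0 : dist z xstar ≤ dist (y 0) xstar + η := by
    linarith [dist_triangle z (y 0) xstar, dist_comm z (y 0), min_le_right δ₁ η]
  have hβz := hβη _ ⟨dist_nonneg, mem_closedBall.mp (hR hy0)⟩ j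
    ⟨j.cast_nonneg, by exact_mod_cast hjJ⟩ _ ⟨dist_nonneg, hz0⟩
  linarith [dist_triangle (y j) (P^[j] z) xstar, hβP z hzS j,
    htrack δ (hδ.trans (min_le_left _ _)) N y hy z hzS hzy j hjN hjJ]

end Dynamics

theorem stmt_9_general (n : ℕ)
    (S : Set (EuclideanSpace ℝ (Fin n))) (hS : IsCompact S)
    (P : EuclideanSpace ℝ (Fin n) → EuclideanSpace ℝ (Fin n))
    (hPmaps : MapsTo P S S) (hPcont : ContinuousOn P S)
    (xstar : EuclideanSpace ℝ (Fin n))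
    (hstable : ∀ ε > (0:ℝ), ∃ δ > (0:ℝ), ∀ x ∈ S, dist x xstar ≤ δ →
      ∀ k : ℕ, dist (P^[k] x) xstar ≤ ε)
    (hattr : ∀ x ∈ S, Tendsto (fun k : ℕ => P^[k] x) atTop (nhds xstar)) :
    ∃ β : ℝ → ℝ → ℝ, IsClassKL β ∧ (∀ s : ℝ, 0 ≤ s → s ≤ β s 0) ∧
      (∀ x ∈ S, ∀ k : ℕ, dist (P^[k] x) xstar ≤ β (dist x xstar) (k : ℝ)) ∧
      (∀ ε > (0:ℝ), ∀ K : Set (EuclideanSpace ℝ (Fin n)), IsCompact K → ∀ J : ℕ,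
        ∃ δstar > (0:ℝ), ∀ δ ∈ Ioc (0:ℝ) δstar,
          ∀ N : ℕ, ∀ y : ℕ → EuclideanSpace ℝ (Fin n),
            y 0 ∈ K →
            (∀ j < N, ∃ z ∈ closedBall (y j) δ ∩ S, dist (y (j+1)) (P z) ≤ δ) →
            ∀ j ≤ N, j ≤ J →
              dist (y j) xstar ≤ β (dist (y 0) xstar) (j : ℝ) + ε) := by
  obtain ⟨β, hβ, hβ0, hβmin⟩ := exists_classKL_ge_min
    (monotone_stabilityModulus hS.isBounded hPmaps) (tendsto_stabilityModulus hstable)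
    (antitone_attractionModulus hS.isBounded hPmaps)
    (tendsto_attractionModulus
      (tendstoUniformlyOn_iterate_of_stable hS hPcont hPmaps hstable hattr))
  have hβP : ∀ x ∈ S, ∀ k : ℕ, dist (P^[k] x) xstar ≤ β (dist x xstar) k := fun x hx k =>
    (le_min (dist_iterate_le_stabilityModulus hS.isBounded hPmaps hx k)
      (dist_iterate_le_attractionModulus hS.isBounded hPmaps hx k)).trans
      (hβmin _ _ dist_nonneg)
  exact ⟨β, hβ, hβ0, hβP, fun ε hε K hK J => exists_forall_isPerturbedSeq_dist_le_add hβ hβ0 hβP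
    (hS.uniformContinuousOn_of_continuous hPcont) hPmaps hε hK.isBounded J⟩

/-- Semiglobal practical preservation of the `KL` bound of a stable and globally
attractive fixed point of the exact Poincaré map under `δ`-perturbed (computed)
iterations. -/
theorem stmt_9 (n : ℕ) (hn : 1 ≤ n)
    (S : Set (EuclideanSpace ℝ (Fin n))) (hS : IsCompact S)
    (P : EuclideanSpace ℝ (Fin n) → EuclideanSpace ℝ (Fin n))
    (hPmaps : MapsTo P S S) (hPcont : ContinuousOn P S)
    (xstar : EuclideanSpace ℝ (Fin n)) (hxS : xstar ∈ S)
    (hfix : P xstar = xstar)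
    (hstable : ∀ ε > (0:ℝ), ∃ δ > (0:ℝ), ∀ x ∈ S, dist x xstar ≤ δ →
      ∀ k : ℕ, dist (P^[k] x) xstar ≤ ε)
    (hattr : ∀ x ∈ S, Tendsto (fun k : ℕ => P^[k] x) atTop (nhds xstar)) :
    ∃ β : ℝ → ℝ → ℝ, IsClassKL β ∧ (∀ s : ℝ, 0 ≤ s → s ≤ β s 0) ∧
      (∀ x ∈ S, ∀ k : ℕ, dist (P^[k] x) xstar ≤ β (dist x xstar) (k : ℝ)) ∧
      (∀ ε > (0:ℝ), ∀ K : Set (EuclideanSpace ℝ (Fin n)), IsCompact K → ∀ J : ℕ,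
        ∃ δstar > (0:ℝ), ∀ δ ∈ Ioc (0:ℝ) δstar,
          ∀ N : ℕ, ∀ y : ℕ → EuclideanSpace ℝ (Fin n),
            y 0 ∈ K →
            (∀ j < N, ∃ z ∈ closedBall (y j) δ ∩ S, dist (y (j+1)) (P z) ≤ δ) →
            ∀ j ≤ N, j ≤ J →
              dist (y j) xstar ≤ β (dist (y 0) xstar) (j : ℝ) + ε) :=
  stmt_9_general n S hS P hPmaps hPcont xstar hstable hattr
end

section
/- Fix parameters a > 0, B > 0, q_max > 0 and m ∈ (0,1). Set ξ₂ := 2Bm/(1+m) and T* := 2B(1−m)/(a(1+m)). Define q(t) := q_max + (ξ₂ − B)t + a t²/2 and r(t) := ξ₂ + a t for t ∈ ℝ. Then: (i) q'(t) = r(t) − B and r'(t) = a for all t, with q(0) = q_max and r(0) = ξ₂; (ii) q(t) < q_max for every t ∈ (0, T*); (iii) q(T*) = q_max and r(T*) = 2B/(1+m) > B, so (q(T*), r(T*)) ∈ D, and T* = inf{t ≥ 0 : (q(t), r(t)) ∈ D}; (iv) g(q(T*), r(T*)) = (q_max, ξ₂) = (q(0), r(0)). Hence the corresponding hybrid solution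 is flow periodic with period T* and one jump per period. -/
open Set

/-- The congestion-control hybrid system admits a flow periodic solution with period
`T* = 2B(1−m)/(a(1+m))` and one jump per period, starting from `(q_max, 2Bm/(1+m))`. -/
theorem stmt_10 (a B qmax m : ℝ) (ha : 0 < a) (hB : 0 < B) (hqmax : 0 < qmax)
    (hm : m ∈ Ioo (0:ℝ) 1)
    (ξ₂ Tstar : ℝ) (hξ₂ : ξ₂ = 2*B*m/(1+m)) (hTstar : Tstar = 2*B*(1-m)/(a*(1+m)))
    (q r : ℝ → ℝ)
    (hq : ∀ t, q t = qmax + (ξ₂ - B)*t + a*t^2/2)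
    (hr : ∀ t, r t = ξ₂ + a*t)
    (D : Set (ℝ × ℝ)) (hD : D = {x : ℝ × ℝ | x.1 = qmax ∧ B ≤ x.2})
    (g : ℝ × ℝ → ℝ × ℝ) (hg : ∀ x, g x = (qmax, m * x.2)) :
    (∀ t, HasDerivAt q (r t - B) t) ∧ (∀ t, HasDerivAt r a t) ∧
    q 0 = qmax ∧ r 0 = ξ₂ ∧
    (∀ t ∈ Ioo (0:ℝ) Tstar, q t < qmax) ∧
    q Tstar = qmax ∧ r Tstar = 2*B/(1+m) ∧ B < 2*B/(1+m) ∧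
    (q Tstar, r Tstar) ∈ D ∧
    Tstar = sInf {t : ℝ | 0 ≤ t ∧ (q t, r t) ∈ D} ∧
    g (q Tstar, r Tstar) = (q 0, r 0) := by
  obtain ⟨hm0, hm1⟩ := hm
  have h1m : (0:ℝ) < 1 + m := by linarith
  have hqfun : q = fun t => qmax + (ξ₂ - B)*t + a*t^2/2 := funext hq
  have hrfun : r = fun t => ξ₂ + a*t := funext hr
  have hqT : q Tstar = qmax := by
    rw [hq, hξ₂, hTstar]; field_simp; ring
  have hrT : r Tstar = 2*B/(1+m) := by
    rw [hr, hξ₂, hTstar]; field_simp; ring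
  have hBlt : B < 2*B/(1+m) := by
    rw [lt_div_iff₀ h1m]; nlinarith
  have hξ₂ltB : ξ₂ < B := by
    rw [hξ₂, div_lt_iff₀ h1m]; nlinarith
  have hTpos : 0 < Tstar := by
    rw [hTstar]
    apply div_pos (by nlinarith) (by positivity)
  have hmid : ∀ t ∈ Ioo (0:ℝ) Tstar, q t < qmax := by
    intro t ⟨ht0, htT⟩
    rw [hq]
    have key : ξ₂ - B = -(a * Tstar / 2) := by
      rw [hξ₂, hTstar]; field_simp; ring
    nlinarith [mul_pos ht0 (sub_pos.mpr htT)]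
  have hq0 : q 0 = qmax := by rw [hq]; ring
  have hr0 : r 0 = ξ₂ := by rw [hr]; ring
  refine ⟨?_, ?_, hq0, hr0, hmid, hqT, hrT, hBlt, ?_, ?_, ?_⟩
  · intro t
    rw [hqfun]
    have : HasDerivAt (fun t => qmax + (ξ₂ - B)*t + a*t^2/2)
        ((ξ₂ - B) + a * t) t := by
      have h1 : HasDerivAt (fun t : ℝ => qmax + (ξ₂ - B)*t) (ξ₂ - B) t :=
        ((hasDerivAt_id t).const_mul (ξ₂ - B)).const_add qmax |>.congr_deriv (by ring)
      have h2 : HasDerivAt (fun t : ℝ => a*t^2/2) (a * t) t := by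
        have := ((hasDerivAt_pow 2 t).const_mul a).div_const 2
        simpa using this.congr_deriv (by push_cast; ring)
      exact h1.add h2
    have heq : r t - B = (ξ₂ - B) + a * t := by rw [hr]; ring
    rw [heq]; exact this
  · intro t
    rw [hrfun]
    simpa using ((hasDerivAt_id t).const_mul a).const_add ξ₂ |>.congr_deriv (by ring)
  · rw [hD]; refine ⟨hqT, ?_⟩; show B ≤ r Tstar; rw [hrT]; exact hBlt.le
  · have hmem : Tstar ∈ {t : ℝ | 0 ≤ t ∧ (q t, r t) ∈ D} := by
      rw [hD]; refine ⟨hTpos.le, hqT, ?_⟩; show B ≤ r Tstar; rw [hrT]; exact hBlt.le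
    have hlb : ∀ t ∈ {t : ℝ | 0 ≤ t ∧ (q t, r t) ∈ D}, Tstar ≤ t := by
      rintro t ⟨ht0, htD⟩
      rw [hD] at htD
      obtain ⟨hq_eq, hr_ge⟩ := htD
      by_contra hlt
      push_neg at hlt
      rcases eq_or_lt_of_le ht0 with h0 | h0
      · rw [← h0] at hr_ge
        simp only at hr_ge
        rw [hr0] at hr_ge
        linarith
      · have := hmid t ⟨h0, hlt⟩
        simp only at hq_eq
        linarith [hq_eq]
    exact le_antisymm (le_csInf ⟨Tstar, hmem⟩ hlb) (csInf_le ⟨Tstar, hlb⟩ hmem)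
  · rw [hg, hrT, hqT, hq0, hr0, hξ₂]
    simp only [Prod.mk.injEq]
    constructor
    · trivial
    · field_simp
end

section
/- Fix parameters a > 0, B > 0, q_max > 0 and m ∈ (0,1) with m(B + √(2 a q_max)) < B. Let r₀ ∈ [B, B + √(2 a q_max)]. Define q̃(t) := q_max + (m r₀ − B)t + a t²/2 and r̃(t) := m r₀ + a t for t ∈ ℝ, so that (q̃, r̃) solves the flow dynamics q̇ = r − B, ṙ = a from the post-jump point g(q_max, r₀) = (q_max, m r₀). Set T̂ := 2(B − m r₀)/a. Then T̂ > 0, q̃(t) < q_max for every t ∈ (0, T̂), q̃(T̂) = q_max, r̃(T̂) = 2B − m r₀ ≥ B, and T̂ = inf{t ≥ 0 : (q̃(t), r̃(t)) ∈ D}. Consequently the hybrid Poincaré map satisfies P(q_max, r₀) = (q_max, 2B − m r₀). -/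
open Set

/-!
After the jump the queue evolves as the quadratic `q_max + (m r₀ - B) t + a t² / 2`, which returns to
`q_max` only at `t = 0` and `t = T̂ = 2 (B - m r₀) / a`, staying below `q_max` in between. Since
`m r₀ ≤ m (B + √(2 a q_max)) < B`, the rate is below `B` at `t = 0`, so the set of hitting times of the jump set is exactly
`{T̂}`.
-/

section Quadratic

variable {q₀ v a : ℝ}

theorem hasDerivAt_quadratic (q₀ v a t : ℝ) :
    HasDerivAt (fun t => q₀ + v * t + a * t ^ 2 / 2) (v + a * t) t := by
  refine ((((hasDerivAt_id t).const_mul v).const_add q₀).add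
    (((hasDerivAt_pow 2 t).const_mul a).div_const 2)).congr_deriv ?_
  push_cast; ring

theorem quadratic_eq_self_iff (ha : a ≠ 0) {t : ℝ} :
    q₀ + v * t + a * t ^ 2 / 2 = q₀ ↔ t = 0 ∨ t = -2 * v / a := by
  have factor : q₀ + v * t + a * t ^ 2 / 2 - q₀ = a / 2 * (t * (t - -2 * v / a)) := by
    field_simp; ring
  rw [← sub_eq_zero, factor, mul_eq_zero, mul_eq_zero, sub_eq_zero]
  simp [ha]

theorem quadratic_lt_self_of_mem_Ioo (ha : 0 < a) {t : ℝ} (ht : t ∈ Ioo 0 (-2 * v / a)) :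
    q₀ + v * t + a * t ^ 2 / 2 < q₀ := by
  obtain ⟨ht₀, htT⟩ := ht
  have hvt : v + a * t / 2 < 0 := by
    have := (lt_div_iff₀ ha).1 htT
    linarith
  nlinarith [mul_neg_of_pos_of_neg ht₀ hvt]

end Quadratic

theorem stmt_11_general (a B qmax m r₀ : ℝ) (ha : 0 < a)
    (hm : m ∈ Ioo (0:ℝ) 1)
    (hcond : m * (B + Real.sqrt (2*a*qmax)) < B)
    (hr₀ : r₀ ∈ Icc B (B + Real.sqrt (2*a*qmax)))
    (qt rt : ℝ → ℝ)
    (hqt : ∀ t, qt t = qmax + (m*r₀ - B)*t + a*t^2/2)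
    (hrt : ∀ t, rt t = m*r₀ + a*t)
    (D : Set (ℝ × ℝ)) (hD : D = {x : ℝ × ℝ | x.1 = qmax ∧ B ≤ x.2})
    (That : ℝ) (hThat : That = 2*(B - m*r₀)/a) :
    (∀ t, HasDerivAt qt (rt t - B) t) ∧ (∀ t, HasDerivAt rt a t) ∧
    qt 0 = qmax ∧ rt 0 = m * r₀ ∧
    0 < That ∧
    (∀ t ∈ Ioo (0:ℝ) That, qt t < qmax) ∧
    qt That = qmax ∧ rt That = 2*B - m*r₀ ∧ B ≤ 2*B - m*r₀ ∧
    That = sInf {t : ℝ | 0 ≤ t ∧ (qt t, rt t) ∈ D} ∧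
    (qt That, rt That) = (qmax, 2*B - m*r₀) := by
  have hmr : m * r₀ < B := (mul_le_mul_of_nonneg_left hr₀.2 hm.1.le).trans_lt hcond
  have hThat' : That = -2 * (m * r₀ - B) / a := by rw [hThat]; ring
  have hT : 0 < That := hThat ▸ div_pos (by linarith) ha
  have hqT : qt That = qmax := hqt That ▸ (quadratic_eq_self_iff ha.ne').2 (.inr hThat')
  have hrT : rt That = 2 * B - m * r₀ := by rw [hrt, hThat, mul_div_cancel₀ _ ha.ne']; ring
  have hhit : {t : ℝ | 0 ≤ t ∧ (qt t, rt t) ∈ D} = {That} := by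
    ext t
    simp only [hD, mem_ofPred_eq, mem_singleton_iff]
    constructor
    · rintro ⟨-, hq, hr⟩
      rcases (quadratic_eq_self_iff ha.ne').1 (hqt t ▸ hq) with rfl | rfl
      · rw [hrt] at hr; linarith
      · exact hThat'.symm
    · rintro rfl
      exact ⟨hT.le, hqT, by rw [hrT]; linarith⟩
  refine ⟨fun t => ?_, fun t => ?_, by simp [hqt], by simp [hrt], hT, fun t ht => ?_, hqT, hrT,
    by linarith, by rw [hhit, csInf_singleton], by rw [hqT, hrT]⟩
  · rw [funext hqt, hrt]
    convert hasDerivAt_quadratic qmax (m * r₀ - B) a t using 1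
    ring
  · rw [funext hrt]
    simpa using ((hasDerivAt_id t).const_mul a).const_add (m * r₀)
  · exact hqt t ▸ quadratic_lt_self_of_mem_Ioo ha (hThat' ▸ ht)

/-- Computation of the hybrid Poincaré map of the congestion-control system:
from a jump-set point `(q_max, r₀)`, the flow started at the post-jump point
`(q_max, m r₀)` first returns to the jump set at time `T̂ = 2(B − m r₀)/a`, at the
point `(q_max, 2B − m r₀)`. -/
theorem stmt_11 (a B qmax m r₀ : ℝ) (ha : 0 < a) (hB : 0 < B) (hqmax : 0 < qmax)
    (hm : m ∈ Ioo (0:ℝ) 1)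
    (hcond : m * (B + Real.sqrt (2*a*qmax)) < B)
    (hr₀ : r₀ ∈ Icc B (B + Real.sqrt (2*a*qmax)))
    (qt rt : ℝ → ℝ)
    (hqt : ∀ t, qt t = qmax + (m*r₀ - B)*t + a*t^2/2)
    (hrt : ∀ t, rt t = m*r₀ + a*t)
    (D : Set (ℝ × ℝ)) (hD : D = {x : ℝ × ℝ | x.1 = qmax ∧ B ≤ x.2})
    (That : ℝ) (hThat : That = 2*(B - m*r₀)/a) :
    (∀ t, HasDerivAt qt (rt t - B) t) ∧ (∀ t, HasDerivAt rt a t) ∧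
    qt 0 = qmax ∧ rt 0 = m * r₀ ∧
    0 < That ∧
    (∀ t ∈ Ioo (0:ℝ) That, qt t < qmax) ∧
    qt That = qmax ∧ rt That = 2*B - m*r₀ ∧ B ≤ 2*B - m*r₀ ∧
    That = sInf {t : ℝ | 0 ≤ t ∧ (qt t, rt t) ∈ D} ∧
    (qt That, rt That) = (qmax, 2*B - m*r₀) :=
  stmt_11_general a B qmax m r₀ ha hm hcond hr₀ qt rt hqt hrt D hD That hThat
end

section
/- Let a > 0, b > 0 and b₁ ∈ ℝ with a·b₁ < b, and let ξ₁, ξ₂ satisfy 0 ≤ ξ₂ < ξ₁ < b₁. For i = 1, 2 set T_i := (1/a)·ln((a ξ_i − b)/(a b₁ − b)) and φ_i(t) := (ξ_i − b/a)e^{−a t} + b/a, and set τ(t) := (T₂/T₁)·t. Then 0 < T₁ < T₂ and, for every t ∈ [0, T₁], 0 ≤ φ₁(t) − φ₂(τ(t)) ≤ (ξ₁ − ξ₂)·e^{−a t}; in particular |φ₁(t) − φ₂(τ(t))| ≤ |ξ₁ − ξ₂|·e^{−a t} for every t ∈ [0, T₁]. -/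
open Set

set_option maxHeartbeats 1000000

/-- Zhukovskii-type closeness estimate for the academic system `ẋ = −a x + b`: after the
time reparametrization `τ(t) = (T₂/T₁) t`, the solution from `ξ₂` stays exponentially
close to the solution from `ξ₁` on `[0, T₁]`. -/
theorem stmt_14 (a b b₁ ξ₁ ξ₂ : ℝ) (ha : 0 < a) (hb : 0 < b) (hb₁ : a * b₁ < b)
    (hξ₂ : 0 ≤ ξ₂) (hξ₂₁ : ξ₂ < ξ₁) (hξ₁ : ξ₁ < b₁)
    (T₁ T₂ : ℝ)
    (hT₁ : T₁ = (1/a) * Real.log ((a*ξ₁ - b)/(a*b₁ - b)))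
    (hT₂ : T₂ = (1/a) * Real.log ((a*ξ₂ - b)/(a*b₁ - b)))
    (φ₁ φ₂ : ℝ → ℝ)
    (hφ₁ : ∀ t, φ₁ t = (ξ₁ - b/a) * Real.exp (-a*t) + b/a)
    (hφ₂ : ∀ t, φ₂ t = (ξ₂ - b/a) * Real.exp (-a*t) + b/a)
    (τ : ℝ → ℝ) (hτ : ∀ t, τ t = (T₂/T₁) * t) :
    0 < T₁ ∧ T₁ < T₂ ∧
    (∀ t ∈ Icc (0:ℝ) T₁,
      0 ≤ φ₁ t - φ₂ (τ t) ∧ φ₁ t - φ₂ (τ t) ≤ (ξ₁ - ξ₂) * Real.exp (-a*t)) ∧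
    (∀ t ∈ Icc (0:ℝ) T₁, |φ₁ t - φ₂ (τ t)| ≤ |ξ₁ - ξ₂| * Real.exp (-a*t)) := by
  set u₀ := b - a*b₁ with hu₀
  set u₁ := b - a*ξ₁ with hu₁
  set u₂ := b - a*ξ₂ with hu₂
  have hu₀pos : 0 < u₀ := by simp [hu₀]; linarith
  have hu₀₁ : u₀ < u₁ := by simp [hu₀, hu₁]; nlinarith
  have hu₁₂ : u₁ < u₂ := by simp [hu₁, hu₂]; nlinarith
  have hu₁pos : 0 < u₁ := lt_trans hu₀pos hu₀₁
  have hu₂pos : 0 < u₂ := lt_trans hu₁pos hu₁₂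
  have hratio₁ : (a*ξ₁ - b)/(a*b₁ - b) = u₁/u₀ := by
    rw [show a*ξ₁ - b = -u₁ by ring, show a*b₁ - b = -u₀ by ring, neg_div_neg_eq]
  have hratio₂ : (a*ξ₂ - b)/(a*b₁ - b) = u₂/u₀ := by
    rw [show a*ξ₂ - b = -u₂ by ring, show a*b₁ - b = -u₀ by ring, neg_div_neg_eq]
  rw [hratio₁] at hT₁
  rw [hratio₂] at hT₂
  have hlog₁ : 0 < Real.log (u₁/u₀) :=
    Real.log_pos ((one_lt_div hu₀pos).2 hu₀₁)
  have hT₁pos : 0 < T₁ := by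
    rw [hT₁]; positivity
  have hlog₁₂ : Real.log (u₁/u₀) < Real.log (u₂/u₀) :=
    Real.log_lt_log (by positivity) (by gcongr)
  have hT₁₂ : T₁ < T₂ := by
    rw [hT₁, hT₂]
    have : (0:ℝ) < 1/a := by positivity
    exact mul_lt_mul_of_pos_left hlog₁₂ this
  have hmain : ∀ t ∈ Icc (0:ℝ) T₁,
      0 ≤ φ₁ t - φ₂ (τ t) ∧ φ₁ t - φ₂ (τ t) ≤ (ξ₁ - ξ₂) * Real.exp (-a*t) := by
      intro t ht
      obtain ⟨ht0, htT⟩ := ht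
      have haT₁ : a * T₁ = Real.log (u₁/u₀) := by
        rw [hT₁]; field_simp
      have haT₂ : a * T₂ = Real.log (u₂/u₀) := by
        rw [hT₂]; field_simp
      have hL : a * T₂ - a * T₁ = Real.log u₂ - Real.log u₁ := by
        rw [haT₁, haT₂, Real.log_div (ne_of_gt hu₂pos) (ne_of_gt hu₀pos),
          Real.log_div (ne_of_gt hu₁pos) (ne_of_gt hu₀pos)]
        ring
      set L := Real.log u₂ - Real.log u₁ with hLdef
      have hLpos : 0 < L := by
        have := Real.log_lt_log hu₁pos hu₁₂
        simp [hLdef]; linarith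
      have hτt : τ t = (T₂/T₁) * t := hτ t
      have hτge : t ≤ τ t := by
        rw [hτt]
        have h1 : (1:ℝ) ≤ T₂/T₁ := (one_le_div hT₁pos).2 (le_of_lt hT₁₂)
        nlinarith
      have hkey : a * τ t - a * t = (t/T₁) * L := by
        rw [hτt, ← hL]
        field_simp
      have hs1 : t/T₁ ≤ 1 := (div_le_one hT₁pos).2 htT
      have hs0 : 0 ≤ t/T₁ := by positivity
      have hsL : (t/T₁) * L ≤ L := by nlinarith
      -- E₁ ≤ (u₂/u₁) * E₂
      have hE : Real.exp (-a*t) ≤ (u₂/u₁) * Real.exp (-a * τ t) := by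
        have h1 : Real.exp (-a*t) = Real.exp (a * τ t - a * t) * Real.exp (-a * τ t) := by
          rw [← Real.exp_add]; ring_nf
        rw [h1]
        have h2 : Real.exp (a * τ t - a * t) ≤ u₂/u₁ := by
          rw [hkey]
          calc Real.exp ((t/T₁) * L) ≤ Real.exp L := Real.exp_le_exp.2 hsL
            _ = u₂/u₁ := by
              rw [hLdef, Real.exp_sub, Real.exp_log hu₂pos, Real.exp_log hu₁pos]
        exact mul_le_mul_of_nonneg_right h2 (Real.exp_pos _).le
      have hE' : Real.exp (-a * τ t) ≤ Real.exp (-a*t) := by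
        apply Real.exp_le_exp.2
        have := mul_le_mul_of_nonneg_left hτge ha.le
        linarith
      have hφ : φ₁ t - φ₂ (τ t)
          = (u₂/a) * Real.exp (-a * τ t) - (u₁/a) * Real.exp (-a*t) := by
        rw [hφ₁, hφ₂, hu₁, hu₂]
        field_simp
        ring
      constructor
      · rw [hφ]
        have : u₁ * Real.exp (-a*t) ≤ u₂ * Real.exp (-a * τ t) := by
          calc u₁ * Real.exp (-a*t) ≤ u₁ * ((u₂/u₁) * Real.exp (-a * τ t)) :=
                mul_le_mul_of_nonneg_left hE hu₁pos.le
            _ = u₂ * Real.exp (-a * τ t) := by field_simp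
        have h3 : u₁ * Real.exp (-a*t) / a ≤ u₂ * Real.exp (-a * τ t) / a := by
          gcongr
        rw [div_mul_eq_mul_div, div_mul_eq_mul_div]
        linarith
      · rw [hφ]
        have hud : (ξ₁ - ξ₂) = u₂/a - u₁/a := by
          rw [hu₁, hu₂]; field_simp; ring
        rw [hud]
        have hu2a : 0 ≤ u₂/a := by positivity
        nlinarith [mul_le_mul_of_nonneg_left hE' hu2a]
  refine ⟨hT₁pos, hT₁₂, hmain, ?_⟩
  intro t ht
  obtain ⟨h0, h1⟩ := hmain t ht
  rw [abs_of_nonneg h0, abs_of_nonneg (by linarith : (0:ℝ) ≤ ξ₁ - ξ₂)]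
  exact h1
end
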